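/- arXiv:2107.00991 — 10 statements merged into one kernel-verified Lean document; each statement's English description precedes it below -/
import Mathlib

section
/- Let m > n ≥ 0 and let φ : V_{−(2m+1)} → V_{−(2n+1)} be a kG-module homomorphism. Then the image of φ is contained in the G-fixed points of V_{−(2n+1)}. -/
/-!
Encode the `a`-coordinates of `w ∈ V_{-(2n+1)}` as a polynomial `aPoly w = ∑ cᵢ tⁱ` of degree
`< n`, and its `b`-coordinates as a polynomial `bPoly w` of degree `≤ n`. Then `σ - 1` and `τ - 1`
become `bPoly ((σ - 1) w) = aPoly w` and `bPoly ((τ - 1) w) = t · aPoly w`. For an equivariant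
`φ : V_{-(2m+1)} → V_{-(2n+1)}`, the polynomials `pᵢ = aPoly (φ aᵢ)` therefore satisfy
`p_{i+1} = t · pᵢ`, as `(σ - 1) a_{i+1} = bᵢ = (τ - 1) aᵢ`. So `p_m = t^{m-1} p₁`, whose degree
is `< n ≤ m - 1` only if `p₁ = 0`. Thus `φ` has no `a`-components, i.e. lands in the span of the `bⱼ`, which `G` fixes.
-/

/-- The Klein four-group `G = C₂ × C₂`. -/
abbrev K4 : Type := Multiplicative (ZMod 2 × ZMod 2)

/-- The generator `σ` of the Klein four-group. -/
def sg : K4 := Multiplicative.ofAdd ((1 : ZMod 2), (0 : ZMod 2))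

/-- The generator `τ` of the Klein four-group. -/
def tg : K4 := Multiplicative.ofAdd ((0 : ZMod 2), (1 : ZMod 2))

/-- The subgroup `H₁ = ⟨σ⟩`. -/
def H1 : Subgroup K4 := Subgroup.zpowers sg

/-- The subgroup `H₂ = ⟨τ⟩`. -/
def H2 : Subgroup K4 := Subgroup.zpowers tg

/-- The subgroup `H₃ = ⟨στ⟩`. -/
def H3 : Subgroup K4 := Subgroup.zpowers (sg * tg)

/-- `V` carries the structure of the module `V_{-(2n+1)}`: the basis vector `B (Sum.inl i)`
is `a_{i+1}` (for `0 ≤ i ≤ n-1`) and `B (Sum.inr j)` is `b_j` (for `0 ≤ j ≤ n`), with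
`X·aᵢ = b_{i-1}`, `Y·aᵢ = bᵢ`, `X·bⱼ = Y·bⱼ = 0`, i.e. (with `σ = 1 + X`, `τ = 1 + Y`)
`σ·aᵢ = aᵢ + b_{i-1}`, `τ·aᵢ = aᵢ + bᵢ`, and `σ, τ` fix the `bⱼ`. -/
def IsVneg (k : Type) [Field k] (n : ℕ) (V : Type) [AddCommGroup V] [Module k V]
    [DistribMulAction K4 V] (B : Module.Basis (Fin n ⊕ Fin (n + 1)) k V) : Prop :=
  (∀ i : Fin n, sg • B (Sum.inl i) = B (Sum.inl i) + B (Sum.inr i.castSucc)) ∧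
  (∀ i : Fin n, tg • B (Sum.inl i) = B (Sum.inl i) + B (Sum.inr i.succ)) ∧
  (∀ j : Fin (n + 1), sg • B (Sum.inr j) = B (Sum.inr j)) ∧
  (∀ j : Fin (n + 1), tg • B (Sum.inr j) = B (Sum.inr j))

open Polynomial

theorem Polynomial.eq_zero_of_eq_X_mul_of_degree_lt {R : Type*} [Semiring R] {m n : ℕ}
    (hnm : n < m) {p : Fin m → R[X]} (hp : ∀ i j : Fin m, (j : ℕ) = i + 1 → p j = X * p i)
    (hdeg : ∀ i, (p i).degree < n) (i : Fin m) : p i = 0 := by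
  nontriviality R
  have hm : 0 < m := n.zero_le.trans_lt hnm
  have hpow : ∀ t (ht : t < m), p ⟨t, ht⟩ = X ^ t * p ⟨0, hm⟩ := by
    intro t
    induction t with
    | zero => simp
    | succ t ih =>
      intro ht
      rw [hp ⟨t, by omega⟩ _ rfl, ih, pow_succ', mul_assoc]
  have h0 : p ⟨0, hm⟩ = 0 := by
    by_contra h
    have hlt := hdeg ⟨m - 1, by omega⟩
    rw [hpow, X_pow_mul, degree_mul_X_pow, degree_eq_natDegree h] at hlt
    have : (p ⟨0, hm⟩).natDegree + (m - 1) < n := by exact_mod_cast hlt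
    omega
  rw [← Fin.eta i i.isLt, hpow, h0, mul_zero]

namespace IsVneg

open Module

variable {k : Type} [Field k] {n : ℕ} {V : Type} [AddCommGroup V] [Module k V]
  (B : Basis (Fin n ⊕ Fin (n + 1)) k V)

noncomputable def aPoly : V →ₗ[k] k[X] :=
  ∑ i : Fin n, (monomial (i : ℕ)).comp (B.coord (Sum.inl i))

noncomputable def bPoly : V →ₗ[k] k[X] :=
  ∑ j : Fin (n + 1), (monomial (j : ℕ)).comp (B.coord (Sum.inr j))

theorem aPoly_apply (w : V) : aPoly B w = ∑ i : Fin n, monomial i (B.repr w (Sum.inl i)) := by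
  simp [aPoly]

theorem coeff_aPoly (w : V) (i : Fin n) : (aPoly B w).coeff i = B.repr w (Sum.inl i) := by
  rw [aPoly_apply, finsetSum_coeff, Finset.sum_eq_single i]
  · simp
  · intro l _ hl
    simp [coeff_monomial, Fin.val_ne_of_ne hl]
  · simp

theorem degree_aPoly_lt (w : V) : (aPoly B w).degree < n := by
  simpa only [aPoly_apply, ← C_mul_X_pow_eq_monomial] using degree_sum_fin_lt _

theorem bPoly_smul_basis_inr (c : k) (j : Fin (n + 1)) :
    bPoly B (c • B (Sum.inr j)) = monomial j c := by
  rw [map_smul, bPoly, LinearMap.sum_apply, Finset.sum_eq_single j]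
  · simp [smul_monomial]
  · intro l _ hl
    simp [hl.symm]
  · simp

variable [DistribMulAction K4 V] [SMulCommClass K4 k V] {B}

theorem smul_sub_self_eq_sum {g : K4} {f : Fin n → Fin (n + 1)}
    (h₁ : ∀ i, g • B (Sum.inl i) = B (Sum.inl i) + B (Sum.inr (f i)))
    (h₂ : ∀ j, g • B (Sum.inr j) = B (Sum.inr j)) (w : V) :
    g • w - w = ∑ i : Fin n, B.repr w (Sum.inl i) • B (Sum.inr (f i)) := by
  conv_lhs => rw [← B.sum_repr w]
  simp only [Finset.smul_sum, smul_comm g, Fintype.sum_sum_type, h₁, h₂, smul_add,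
    Finset.sum_add_distrib]
  abel

theorem bPoly_smul_sub_self {g : K4} {f : Fin n → Fin (n + 1)}
    (h₁ : ∀ i, g • B (Sum.inl i) = B (Sum.inl i) + B (Sum.inr (f i)))
    (h₂ : ∀ j, g • B (Sum.inr j) = B (Sum.inr j)) (w : V) :
    bPoly B (g • w - w) = ∑ i : Fin n, monomial (f i) (B.repr w (Sum.inl i)) := by
  simp only [smul_sub_self_eq_sum h₁ h₂, map_sum, bPoly_smul_basis_inr]

variable (h : IsVneg k n V B)
include h

theorem bPoly_sg_smul_sub_self (w : V) : bPoly B (sg • w - w) = aPoly B w := by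
  rw [bPoly_smul_sub_self h.1 h.2.2.1, aPoly_apply]
  rfl

theorem bPoly_tg_smul_sub_self (w : V) : bPoly B (tg • w - w) = X * aPoly B w := by
  simp only [bPoly_smul_sub_self h.2.1 h.2.2.2, aPoly_apply, Finset.mul_sum, X_mul_monomial,
    Fin.val_succ]

theorem aPoly_eq_zero_of_sg_smul_eq {w : V} (hw : sg • w = w) : aPoly B w = 0 := by
  rw [← h.bPoly_sg_smul_sub_self, hw, sub_self, map_zero]

theorem smul_eq_self_of_aPoly_eq_zero {w : V} (hw : aPoly B w = 0) (g : K4) : g • w = w := by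
  have hc : ∀ i, B.repr w (Sum.inl i) = 0 := fun i => by rw [← coeff_aPoly, hw, coeff_zero]
  have hsg : sg • w = w := by
    rw [← sub_eq_zero, smul_sub_self_eq_sum h.1 h.2.2.1]
    simp [hc]
  have htg : tg • w = w := by
    rw [← sub_eq_zero, smul_sub_self_eq_sum h.2.1 h.2.2.2]
    simp [hc]
  have hg : g = 1 ∨ g = sg ∨ g = tg ∨ g = sg * tg := by
    revert g
    decide
  rcases hg with rfl | rfl | rfl | rfl
  · exact one_smul _ w
  · exact hsg
  · exact htg
  · rw [mul_smul, htg, hsg]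

variable {m : ℕ} {M : Type} [AddCommGroup M] [Module k M] [DistribMulAction K4 M]
  {BM : Basis (Fin m ⊕ Fin (m + 1)) k M} (hM : IsVneg k m M BM)
  {φ : M →ₗ[k] V} (hφ : ∀ (g : K4) (v : M), φ (g • v) = g • φ v)
include hM hφ

theorem aPoly_map_basis_inl_eq_X_mul (i j : Fin m) (hij : (j : ℕ) = i + 1) :
    aPoly B (φ (BM (Sum.inl j))) = X * aPoly B (φ (BM (Sum.inl i))) := by
  have hj : j.castSucc = i.succ := Fin.ext (by simp [hij])
  calc aPoly B (φ (BM (Sum.inl j)))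
      = bPoly B (sg • φ (BM (Sum.inl j)) - φ (BM (Sum.inl j))) :=
        (h.bPoly_sg_smul_sub_self _).symm
    _ = bPoly B (φ (BM (Sum.inr i.succ))) := by
        rw [← hφ, ← map_sub, hM.1 j, add_sub_cancel_left, hj]
    _ = bPoly B (tg • φ (BM (Sum.inl i)) - φ (BM (Sum.inl i))) := by
        rw [← hφ, ← map_sub, hM.2.1 i, add_sub_cancel_left]
    _ = X * aPoly B (φ (BM (Sum.inl i))) := h.bPoly_tg_smul_sub_self _

theorem aPoly_map_eq_zero (hnm : n < m) (v : M) : aPoly B (φ v) = 0 := by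
  suffices hzero : aPoly B ∘ₗ φ = 0 from LinearMap.congr_fun hzero v
  refine BM.ext fun x => ?_
  rcases x with i | j
  · exact Polynomial.eq_zero_of_eq_X_mul_of_degree_lt hnm
      (h.aPoly_map_basis_inl_eq_X_mul hM hφ) (fun i => degree_aPoly_lt B _) i
  · exact h.aPoly_eq_zero_of_sg_smul_eq (by rw [← hφ, hM.2.2.1 j])

end IsVneg

theorem stmt1_general (k : Type) [Field k] (m n : ℕ) (hmn : n < m)
    (M : Type) [AddCommGroup M] [Module k M] [DistribMulAction K4 M]
    (N : Type) [AddCommGroup N] [Module k N] [DistribMulAction K4 N] [SMulCommClass K4 k N]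
    (BM : Module.Basis (Fin m ⊕ Fin (m + 1)) k M) (hM : IsVneg k m M BM)
    (BN : Module.Basis (Fin n ⊕ Fin (n + 1)) k N) (hN : IsVneg k n N BN)
    (φ : M →ₗ[k] N) (hφ : ∀ (g : K4) (v : M), φ (g • v) = g • φ v) :
    ∀ (v : M) (g : K4), g • φ v = φ v :=
  fun v => hN.smul_eq_self_of_aPoly_eq_zero (hN.aPoly_map_eq_zero hM hφ hmn v)

/-- Let `m > n ≥ 0` and let `φ : V_{-(2m+1)} → V_{-(2n+1)}` be a `kG`-module homomorphism.
Then the image of `φ` is contained in the `G`-fixed points of `V_{-(2n+1)}`. -/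
theorem stmt1 (k : Type) [Field k] [CharP k 2] (m n : ℕ) (hmn : n < m)
    (M : Type) [AddCommGroup M] [Module k M] [DistribMulAction K4 M] [SMulCommClass K4 k M]
    (N : Type) [AddCommGroup N] [Module k N] [DistribMulAction K4 N] [SMulCommClass K4 k N]
    (BM : Module.Basis (Fin m ⊕ Fin (m + 1)) k M) (hM : IsVneg k m M BM)
    (BN : Module.Basis (Fin n ⊕ Fin (n + 1)) k N) (hN : IsVneg k n N BN)
    (φ : M →ₗ[k] N) (hφ : ∀ (g : K4) (v : M), φ (g • v) = g • φ v) :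
    ∀ (v : M) (g : K4), g • φ v = φ v :=
  stmt1_general k m n hmn M N BM hM BN hN φ hφ
end

section
/- Let m > n ≥ 0 and let φ : V_{−(2m+1)} → V_{−(2n+1)} be a kG-module homomorphism. Then the G-fixed points of V_{−(2m+1)} are contained in the kernel of φ. -/
/-! The fixed points of `V_{-(2m+1)}` lie in the span of `b₀, …, b_m`, so it suffices that `φ`
kills every `bⱼ`. Record the `b`-coordinates `cⱼ` of a vector of `V_{-(2n+1)}` as the polynomial
`∑ⱼ cⱼ tʲ`, of degree `≤ n`; in this encoding `Y = t · X`. Since `X aᵢ = bᵢ₋₁` and `Y aᵢ = bᵢ`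
in `V_{-(2m+1)}`, the polynomials `Pⱼ` of `φ bⱼ` satisfy `Pⱼ = tʲ P₀`, and `deg P_m ≤ n < m`
forces `P₀ = 0`, hence every `Pⱼ = 0`. Each `φ bⱼ` is fixed, so it lies in the `b`-span, where
the encoding is injective. -/

open Polynomial

section BasisAction

variable {k V ι κ G : Type*} [Field k] [AddCommGroup V] [Module k V] [Fintype ι] [Fintype κ]
  [Monoid G] [DistribMulAction G V] [SMulCommClass G k V]

theorem Module.Basis.smul_sub_eq_sum_of_smul_inl (B : Module.Basis (ι ⊕ κ) k V) {g : G}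
    {f : ι → κ} (h_inl : ∀ i, g • B (.inl i) = B (.inl i) + B (.inr (f i)))
    (h_inr : ∀ j, g • B (.inr j) = B (.inr j)) (w : V) :
    g • w - w = ∑ i, B.repr w (.inl i) • B (.inr (f i)) := calc
  g • w - w = ∑ x, B.repr w x • (g • B x - B x) := by
    conv_lhs => rw [← B.sum_repr w]
    simp only [Finset.smul_sum, smul_sub, smul_comm g, Finset.sum_sub_distrib]
  _ = _ := by simp [Fintype.sum_sum_type, h_inl, h_inr]

theorem Module.Basis.repr_inl_eq_zero_of_smul_eq_self (B : Module.Basis (ι ⊕ κ) k V) {g : G}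
    {f : ι → κ} (hf : Function.Injective f)
    (h_inl : ∀ i, g • B (.inl i) = B (.inl i) + B (.inr (f i)))
    (h_inr : ∀ j, g • B (.inr j) = B (.inr j)) {w : V} (hw : g • w = w) (i : ι) :
    B.repr w (.inl i) = 0 := by
  have hli := B.linearIndependent.comp _ (Sum.inr_injective.comp hf)
  refine Fintype.linearIndependent_iff.mp hli (fun i => B.repr w (.inl i)) ?_ i
  simpa [hw] using (B.smul_sub_eq_sum_of_smul_inl h_inl h_inr w).symm

theorem Module.Basis.sum_repr_inr_of_repr_inl_eq_zero (B : Module.Basis (ι ⊕ κ) k V) {w : V}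
    (hw : ∀ i, B.repr w (.inl i) = 0) : ∑ j, B.repr w (.inr j) • B (.inr j) = w := by
  conv_rhs => rw [← B.sum_repr w, Fintype.sum_sum_type]
  simp [hw]

end BasisAction

theorem Polynomial.eq_zero_of_natDegree_X_pow_mul_lt {R : Type*} [Semiring R] [Nontrivial R]
    {p : R[X]} {m : ℕ} (h : (X ^ m * p).natDegree < m) : p = 0 := by
  by_contra hp
  rw [natDegree_X_pow_mul m hp] at h
  omega

section InrPoly

variable {k V ι : Type*} [Field k] [AddCommGroup V] [Module k V] {n : ℕ}

noncomputable def Module.Basis.inrPoly (B : Module.Basis (ι ⊕ Fin (n + 1)) k V) : V →ₗ[k] k[X] :=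
  B.constr k (Sum.elim 0 fun j => X ^ (j : ℕ))

variable (B : Module.Basis (ι ⊕ Fin (n + 1)) k V)

@[simp]
theorem Module.Basis.inrPoly_inl (i : ι) : B.inrPoly (B (.inl i)) = 0 :=
  B.constr_basis k _ _

@[simp]
theorem Module.Basis.inrPoly_inr (j : Fin (n + 1)) : B.inrPoly (B (.inr j)) = X ^ (j : ℕ) :=
  B.constr_basis k _ _

theorem Module.Basis.natDegree_inrPoly_le [Fintype ι] (w : V) : (B.inrPoly w).natDegree ≤ n := by
  rw [← B.sum_repr w, map_sum]
  refine natDegree_sum_le_of_forall_le _ _ fun x _ => ?_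
  rw [map_smul]
  refine (natDegree_smul_le _ _).trans ?_
  rcases x with i | j
  · simp only [B.inrPoly_inl, natDegree_zero, zero_le]
  · rw [B.inrPoly_inr, natDegree_X_pow]
    exact Nat.lt_succ_iff.mp j.isLt

theorem Module.Basis.eq_zero_of_inrPoly_eq_zero [Fintype ι] {w : V}
    (hw : ∀ i, B.repr w (.inl i) = 0) (h : B.inrPoly w = 0) : w = 0 := by
  have hX : LinearIndependent k fun j : Fin (n + 1) => (X ^ (j : ℕ) : k[X]) := by
    simpa [Function.comp_def, coe_basisMonomials, X_pow_eq_monomial] using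
      (basisMonomials k).linearIndependent.comp _ Fin.val_injective
  have hcoord : ∀ j, B.repr w (.inr j) = 0 := by
    refine Fintype.linearIndependent_iff.mp hX _ ?_
    have h' := congrArg B.inrPoly (B.sum_repr_inr_of_repr_inl_eq_zero hw)
    simpa [h] using h'
  rw [← B.sum_repr_inr_of_repr_inl_eq_zero hw]
  simp [hcoord]

end InrPoly

namespace IsVneg

variable {k V : Type} [Field k] [AddCommGroup V] [Module k V] [DistribMulAction K4 V]
  {n : ℕ} {B : Module.Basis (Fin n ⊕ Fin (n + 1)) k V}

theorem sg_smul_sub_inl (hB : IsVneg k n V B) (i : Fin n) :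
    sg • B (.inl i) - B (.inl i) = B (.inr i.castSucc) := by
  rw [hB.1 i, add_sub_cancel_left]

theorem tg_smul_sub_inl (hB : IsVneg k n V B) (i : Fin n) :
    tg • B (.inl i) - B (.inl i) = B (.inr i.succ) := by
  rw [hB.2.1 i, add_sub_cancel_left]

theorem repr_inl_eq_zero_of_sg_smul_eq_self [SMulCommClass K4 k V] (hB : IsVneg k n V B)
    {w : V} (hw : sg • w = w) (i : Fin n) : B.repr w (.inl i) = 0 :=
  B.repr_inl_eq_zero_of_smul_eq_self (Fin.castSucc_injective n) hB.1 hB.2.2.1 hw i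

theorem inrPoly_tg_smul_sub [SMulCommClass K4 k V] (hB : IsVneg k n V B) (w : V) :
    B.inrPoly (tg • w - w) = X * B.inrPoly (sg • w - w) := by
  rw [B.smul_sub_eq_sum_of_smul_inl hB.1 hB.2.2.1, B.smul_sub_eq_sum_of_smul_inl hB.2.1 hB.2.2.2]
  simp [map_sum, Finset.mul_sum, pow_succ']

end IsVneg

theorem IsVneg.map_inr_eq_zero_of_lt {k M N : Type} [Field k] {m n : ℕ} (hmn : n < m)
    [AddCommGroup M] [Module k M] [DistribMulAction K4 M]
    [AddCommGroup N] [Module k N] [DistribMulAction K4 N] [SMulCommClass K4 k N]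
    {BM : Module.Basis (Fin m ⊕ Fin (m + 1)) k M} (hM : IsVneg k m M BM)
    {BN : Module.Basis (Fin n ⊕ Fin (n + 1)) k N} (hN : IsVneg k n N BN)
    (φ : M →ₗ[k] N) (hφ : ∀ (g : K4) (v : M), φ (g • v) = g • φ v) (j : Fin (m + 1)) :
    φ (BM (.inr j)) = 0 := by
  set P : Fin (m + 1) → k[X] := fun j => BN.inrPoly (φ (BM (.inr j))) with hP
  have hshift : ∀ i : Fin m, P i.succ = X * P i.castSucc := fun i => by
    simp only [hP, ← hM.tg_smul_sub_inl, ← hM.sg_smul_sub_inl, map_sub, hφ,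
      hN.inrPoly_tg_smul_sub]
  have hpow : ∀ j : Fin (m + 1), P j = X ^ (j : ℕ) * P 0 :=
    Fin.induction (by simp) fun i hi => by
      rw [hshift, hi, Fin.val_succ, Fin.val_castSucc, pow_succ', mul_assoc]
  have hP0 : P 0 = 0 := by
    refine eq_zero_of_natDegree_X_pow_mul_lt (m := m) ?_
    have hlast := hpow (Fin.last m)
    rw [Fin.val_last] at hlast
    rw [← hlast]
    exact (BN.natDegree_inrPoly_le _).trans_lt hmn
  have hfix : sg • φ (BM (.inr j)) = φ (BM (.inr j)) := by rw [← hφ, hM.2.2.1 j]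
  exact BN.eq_zero_of_inrPoly_eq_zero (hN.repr_inl_eq_zero_of_sg_smul_eq_self hfix)
    (by simpa [hP0] using hpow j)

theorem stmt2_general (k : Type) [Field k] (m n : ℕ) (hmn : n < m)
    (M : Type) [AddCommGroup M] [Module k M] [DistribMulAction K4 M] [SMulCommClass K4 k M]
    (N : Type) [AddCommGroup N] [Module k N] [DistribMulAction K4 N] [SMulCommClass K4 k N]
    (BM : Module.Basis (Fin m ⊕ Fin (m + 1)) k M) (hM : IsVneg k m M BM)
    (BN : Module.Basis (Fin n ⊕ Fin (n + 1)) k N) (hN : IsVneg k n N BN)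
    (φ : M →ₗ[k] N) (hφ : ∀ (g : K4) (v : M), φ (g • v) = g • φ v) :
    ∀ v : M, (∀ g : K4, g • v = v) → φ v = 0 := by
  intro v hv
  rw [← BM.sum_repr_inr_of_repr_inl_eq_zero (hM.repr_inl_eq_zero_of_sg_smul_eq_self (hv sg))]
  simp [map_sum, hM.map_inr_eq_zero_of_lt hmn hN φ hφ]

/-- Let `m > n ≥ 0` and let `φ : V_{-(2m+1)} → V_{-(2n+1)}` be a `kG`-module homomorphism.
Then the `G`-fixed points of `V_{-(2m+1)}` are contained in the kernel of `φ`. -/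
theorem stmt2 (k : Type) [Field k] [CharP k 2] (m n : ℕ) (hmn : n < m)
    (M : Type) [AddCommGroup M] [Module k M] [DistribMulAction K4 M] [SMulCommClass K4 k M]
    (N : Type) [AddCommGroup N] [Module k N] [DistribMulAction K4 N] [SMulCommClass K4 k N]
    (BM : Module.Basis (Fin m ⊕ Fin (m + 1)) k M) (hM : IsVneg k m M BM)
    (BN : Module.Basis (Fin n ⊕ Fin (n + 1)) k N) (hN : IsVneg k n N BN)
    (φ : M →ₗ[k] N) (hφ : ∀ (g : K4) (v : M), φ (g • v) = g • φ v) :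
    ∀ v : M, (∀ g : K4, g • v = v) → φ v = 0 :=
  stmt2_general k m n hmn M N BM hM BN hN φ hφ
end

section
/- Let l > m > n ≥ 0, let ψ : V_{−(2l+1)} → V_{−(2m+1)} and φ : V_{−(2m+1)} → V_{−(2n+1)} be kG-module homomorphisms. Then the composition φ ∘ ψ is the zero map. -/
/-!
Write `c_i(p)` for the coefficient of `a_{p+1}` in `ψ(a_{i+1})`. Since `Y a_i = X a_{i+1}` in
`V_{-(2l+1)}`, and `X`, `Y` send `a_{p+1}` to `b_p`, `b_{p+1}`, equivariance gives
`c_{i+1}(p+1) = c_i(p)`; as the diagonals of `c` are `l` long while only `m < l` values of `p`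
are allowed, `c = 0`. So a homomorphism `V_{-(2l+1)} → V_{-(2m+1)}` maps each `a_i` into the span
of the `b_j`, which `X` and `Y` kill; as every `b_j` is `X a` or `Y a` for some `a_i`, it kills all
`b_j`, hence the span of the `b_j`. Applied to `ψ` and to `φ`, this gives `φ ∘ ψ = 0`.
-/

section TopCoefficients

variable {k : Type} [Field k] {n : ℕ} {V : Type} [AddCommGroup V] [Module k V]
  {B : Module.Basis (Fin n ⊕ Fin (n + 1)) k V}

/-- The coefficient of `a_{p+1}`, extended by zero to all `p : ℤ` so that `X` and `Y` become
uniform shifts of indices. -/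
noncomputable def topCoeff (B : Module.Basis (Fin n ⊕ Fin (n + 1)) k V) (p : ℤ) : V →ₗ[k] k :=
  if h : 0 ≤ p ∧ p < n then B.coord (Sum.inl ⟨p.toNat, by omega⟩) else 0

theorem topCoeff_of_not_mem {p : ℤ} (hp : ¬(0 ≤ p ∧ p < n)) : topCoeff B p = 0 :=
  dif_neg hp

theorem topCoeff_natCast (i : Fin n) : topCoeff B i = B.coord (Sum.inl i) := by
  rw [topCoeff, dif_pos (by omega)]
  simp

theorem topCoeff_basis_inl (p : ℤ) (i : Fin n) :
    topCoeff B p (B (Sum.inl i)) = if p = i then 1 else 0 := by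
  split_ifs with h
  · simp [h, topCoeff_natCast]
  · unfold topCoeff
    split_ifs with hp
    · simp only [Module.Basis.coord_apply, Module.Basis.repr_self, Finsupp.single_apply,
        Sum.inl.injEq, Fin.ext_iff, ite_eq_right_iff, one_ne_zero, imp_false]
      omega
    · rfl

theorem topCoeff_basis_inr (p : ℤ) (j : Fin (n + 1)) : topCoeff B p (B (Sum.inr j)) = 0 := by
  unfold topCoeff
  split_ifs <;> simp

theorem sum_repr_inr_of_topCoeff_eq_zero {v : V} (hv : ∀ p, topCoeff B p v = 0) :
    ∑ j, B.repr v (Sum.inr j) • B (Sum.inr j) = v := by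
  conv_rhs => rw [← B.sum_repr v, Fintype.sum_sum_type]
  have : ∀ i : Fin n, B.repr v (Sum.inl i) = 0 := fun i => by simpa [topCoeff_natCast] using hv i
  simp [this]

theorem smul_eq_self_of_topCoeff_eq_zero {G : Type*} [Monoid G] [DistribMulAction G V]
    [SMulCommClass G k V] {g : G} (hg : ∀ j, g • B (Sum.inr j) = B (Sum.inr j)) {v : V} (hv : ∀ p, topCoeff B p v = 0) : g • v = v := by
  rw [← sum_repr_inr_of_topCoeff_eq_zero hv, Finset.smul_sum]
  simp_rw [smul_comm g, hg]

end TopCoefficients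

namespace IsVneg

variable {k : Type} [Field k] {n : ℕ} {V : Type} [AddCommGroup V] [Module k V]
  [DistribMulAction K4 V] {B : Module.Basis (Fin n ⊕ Fin (n + 1)) k V}

theorem repr_sg_smul_sub [SMulCommClass K4 k V] (hB : IsVneg k n V B) (v : V) (q : Fin (n + 1)) :
    B.repr (sg • v - v) (Sum.inr q) = topCoeff B q v := by
  suffices h : B.coord (Sum.inr q) ∘ₗ (DistribSMul.toLinearMap k V sg - LinearMap.id)
      = topCoeff B q from LinearMap.congr_fun h v
  refine B.ext fun s => ?_
  rcases s with i | j
  · simp [hB.1 i, topCoeff_basis_inl, Finsupp.single_apply, Fin.ext_iff, eq_comm]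
  · simp [hB.2.2.1 j, topCoeff_basis_inr]

theorem repr_tg_smul_sub [SMulCommClass K4 k V] (hB : IsVneg k n V B) (v : V) (q : Fin (n + 1)) :
    B.repr (tg • v - v) (Sum.inr q) = topCoeff B (q - 1) v := by
  suffices h : B.coord (Sum.inr q) ∘ₗ (DistribSMul.toLinearMap k V tg - LinearMap.id)
      = topCoeff B (q - 1) from LinearMap.congr_fun h v
  refine B.ext fun s => ?_
  rcases s with i | j
  · simp only [LinearMap.coe_comp, Function.comp_apply, LinearMap.sub_apply,
      DistribSMul.toLinearMap_apply, hB.2.1 i, LinearMap.id_coe, id_eq, add_sub_cancel_left,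
      Module.Basis.coord_apply, Module.Basis.repr_self, Finsupp.single_apply, Sum.inr.injEq,
      Fin.ext_iff, Fin.val_succ, topCoeff_basis_inl]
    exact if_congr (by omega) rfl rfl
  · simp [hB.2.2.2 j, topCoeff_basis_inr]

theorem sg_smul_sub_succ (hB : IsVneg k n V B) (i : Fin n) (hi : i.val + 1 < n) :
    sg • B (Sum.inl ⟨i + 1, hi⟩) - B (Sum.inl ⟨i + 1, hi⟩) = tg • B (Sum.inl i) - B (Sum.inl i) := by
  rw [hB.1, hB.2.1]
  simp only [add_sub_cancel_left]
  congr 2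

end IsVneg

/-- In polynomial language: a map `C` with `C (t f) = t C f` on `k[t]_{<l}` has `C (t^i) = t^i C 1`,
which has degree `< m < l` only if `C 1 = 0`. -/
theorem eq_zero_of_shift_invariant {R : Type*} [Zero R] {l m : ℕ} (hml : m < l) (c : ℕ → ℤ → R)
    (shift : ∀ i (q : ℤ), i + 1 < l → c (i + 1) (q + 1) = c i q)
    (supp : ∀ i (q : ℤ), i < l → ¬(0 ≤ q ∧ q < m) → c i q = 0) {i : ℕ} (hi : i < l) (q : ℤ) :
    c i q = 0 := by
  have iterate : ∀ t i q, i + t < l → c (i + t) (q + t) = c i q := by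
    intro t
    induction t with
    | zero => simp
    | succ t ih =>
      intro i q h
      rw [← ih i q (by omega), ← shift (i + t) (q + t) (by omega)]
      simp only [Nat.cast_succ, add_assoc]
  have first_row : ∀ q, c 0 q = 0 := by
    intro q
    by_cases hq : q < 0
    · exact supp 0 q (by omega) (by omega)
    · rw [← iterate (l - 1) 0 q (by omega)]
      exact supp _ _ (by omega) (by omega)
  simpa using (iterate i 0 (q - i) (by omega)).trans (first_row _)

section Homomorphisms

variable {k : Type} [Field k] {l m : ℕ} {L M : Type}
  [AddCommGroup L] [Module k L] [DistribMulAction K4 L]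
  [AddCommGroup M] [Module k M] [DistribMulAction K4 M] [SMulCommClass K4 k M]
  {BL : Module.Basis (Fin l ⊕ Fin (l + 1)) k L} {BM : Module.Basis (Fin m ⊕ Fin (m + 1)) k M}
  {ψ : L →ₗ[k] M}

theorem topCoeff_map_basis_inl_eq_zero (hlm : m < l) (hL : IsVneg k l L BL) (hM : IsVneg k m M BM)
    (hψ : ∀ (g : K4) (v : L), ψ (g • v) = g • ψ v) (i : Fin l) (p : ℤ) :
    topCoeff BM p (ψ (BL (Sum.inl i))) = 0 := by
  have hψ_sub (g : K4) (v : L) : ψ (g • v - v) = g • ψ v - ψ v := by rw [map_sub, hψ]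
  let c : ℕ → ℤ → k := fun i p =>
    if h : i < l then topCoeff BM p (ψ (BL (Sum.inl ⟨i, h⟩))) else 0
  have hc := eq_zero_of_shift_invariant hlm c (fun i q hi => ?shift) (fun i q hi hq => ?supp) i.2 p
  · simpa [c] using hc
  case shift =>
    simp only [c, dif_pos hi, dif_pos (by omega : i < l)]
    by_cases hq : 0 ≤ q + 1 ∧ q + 1 ≤ m
    · set r : Fin (m + 1) := ⟨(q + 1).toNat, by omega⟩
      have hr : (r : ℤ) = q + 1 := by simp only [r, Int.ofNat_toNat]; omega
      calc topCoeff BM (q + 1) (ψ (BL (Sum.inl ⟨i + 1, hi⟩)))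
          = BM.repr (ψ (sg • BL (Sum.inl ⟨i + 1, hi⟩) - BL (Sum.inl ⟨i + 1, hi⟩))) (Sum.inr r) := by
            rw [hψ_sub, hM.repr_sg_smul_sub, hr]
        _ = BM.repr (ψ (tg • BL (Sum.inl ⟨i, by omega⟩) - BL (Sum.inl ⟨i, by omega⟩))) (Sum.inr r) := by
            rw [hL.sg_smul_sub_succ ⟨i, by omega⟩ hi]
        _ = topCoeff BM q (ψ (BL (Sum.inl ⟨i, by omega⟩))) := by
            rw [hψ_sub, hM.repr_tg_smul_sub, hr, add_sub_cancel_right]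
    · simp only [topCoeff_of_not_mem (show ¬(0 ≤ q + 1 ∧ q + 1 < m) by omega),
        topCoeff_of_not_mem (show ¬(0 ≤ q ∧ q < m) by omega), LinearMap.zero_apply]
  case supp =>
    simp only [c, dif_pos hi, topCoeff_of_not_mem hq, LinearMap.zero_apply]

theorem map_basis_inr_eq_zero (hlm : m < l) (hL : IsVneg k l L BL) (hM : IsVneg k m M BM)
    (hψ : ∀ (g : K4) (v : L), ψ (g • v) = g • ψ v) (j : Fin (l + 1)) : ψ (BL (Sum.inr j)) = 0 := by
  obtain ⟨g, i, hg, hb⟩ : ∃ (g : K4) (i : Fin l), (∀ j, g • BM (Sum.inr j) = BM (Sum.inr j)) ∧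
      BL (Sum.inr j) = g • BL (Sum.inl i) - BL (Sum.inl i) := by
    by_cases hj : j.val < l
    · refine ⟨sg, ⟨j, hj⟩, hM.2.2.1, ?_⟩
      rw [hL.1, add_sub_cancel_left]
      rfl
    · refine ⟨tg, ⟨l - 1, by omega⟩, hM.2.2.2, ?_⟩
      rw [hL.2.1, add_sub_cancel_left]
      congr 2
      exact Fin.ext (by simp only [Fin.val_succ]; omega)
  rw [hb, map_sub, hψ, smul_eq_self_of_topCoeff_eq_zero hg
    (topCoeff_map_basis_inl_eq_zero hlm hL hM hψ i), sub_self]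

theorem map_eq_zero_of_topCoeff_eq_zero (hlm : m < l) (hL : IsVneg k l L BL)
    (hM : IsVneg k m M BM) (hψ : ∀ (g : K4) (v : L), ψ (g • v) = g • ψ v) {v : L}
    (hv : ∀ p, topCoeff BL p v = 0) : ψ v = 0 := by
  rw [← sum_repr_inr_of_topCoeff_eq_zero hv, map_sum]
  exact Finset.sum_eq_zero fun j _ => by
    rw [map_smul, map_basis_inr_eq_zero hlm hL hM hψ, smul_zero]

end Homomorphisms

theorem stmt3_general (k : Type) [Field k] (l m n : ℕ) (hlm : m < l) (hmn : n < m)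
    (L : Type) [AddCommGroup L] [Module k L] [DistribMulAction K4 L]
    (M : Type) [AddCommGroup M] [Module k M] [DistribMulAction K4 M] [SMulCommClass K4 k M]
    (N : Type) [AddCommGroup N] [Module k N] [DistribMulAction K4 N] [SMulCommClass K4 k N]
    (BL : Module.Basis (Fin l ⊕ Fin (l + 1)) k L) (hL : IsVneg k l L BL)
    (BM : Module.Basis (Fin m ⊕ Fin (m + 1)) k M) (hM : IsVneg k m M BM)
    (BN : Module.Basis (Fin n ⊕ Fin (n + 1)) k N) (hN : IsVneg k n N BN)
    (ψ : L →ₗ[k] M) (hψ : ∀ (g : K4) (v : L), ψ (g • v) = g • ψ v)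
    (φ : M →ₗ[k] N) (hφ : ∀ (g : K4) (v : M), φ (g • v) = g • φ v) :
    ∀ x : L, φ (ψ x) = 0 := by
  intro x
  suffices h : φ ∘ₗ ψ = 0 from LinearMap.congr_fun h x
  refine BL.ext fun s => ?_
  rcases s with i | j
  · exact map_eq_zero_of_topCoeff_eq_zero hmn hM hN hφ
      (topCoeff_map_basis_inl_eq_zero hlm hL hM hψ i)
  · simp [map_basis_inr_eq_zero hlm hL hM hψ j]

/-- Let `l > m > n ≥ 0` and let `ψ : V_{-(2l+1)} → V_{-(2m+1)}` and
`φ : V_{-(2m+1)} → V_{-(2n+1)}` be `kG`-module homomorphisms. Then `φ ∘ ψ = 0`. -/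
theorem stmt3 (k : Type) [Field k] [CharP k 2] (l m n : ℕ) (hlm : m < l) (hmn : n < m)
    (L : Type) [AddCommGroup L] [Module k L] [DistribMulAction K4 L] [SMulCommClass K4 k L]
    (M : Type) [AddCommGroup M] [Module k M] [DistribMulAction K4 M] [SMulCommClass K4 k M]
    (N : Type) [AddCommGroup N] [Module k N] [DistribMulAction K4 N] [SMulCommClass K4 k N]
    (BL : Module.Basis (Fin l ⊕ Fin (l + 1)) k L) (hL : IsVneg k l L BL)
    (BM : Module.Basis (Fin m ⊕ Fin (m + 1)) k M) (hM : IsVneg k m M BM)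
    (BN : Module.Basis (Fin n ⊕ Fin (n + 1)) k N) (hN : IsVneg k n N BN)
    (ψ : L →ₗ[k] M) (hψ : ∀ (g : K4) (v : L), ψ (g • v) = g • ψ v)
    (φ : M →ₗ[k] N) (hφ : ∀ (g : K4) (v : M), φ (g • v) = g • φ v) :
    ∀ x : L, φ (ψ x) = 0 :=
  stmt3_general k l m n hlm hmn L M N BL hL BM hM BN hN ψ hψ φ hφ
end

section
/- For every n ≥ 0, the sum over i = 1, 2, 3 of the images of the relative trace maps Tr^G_{Hᵢ} : (V_{−(2n+1)})^{Hᵢ} → (V_{−(2n+1)})^G is the zero subspace. -/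
/-- The relative trace map `Tr^G_H : M^H → M^G`, `Tr^G_H(x) = Σ_{g ∈ S} g • x`, where the
sum runs over the set `S` of representatives (`Quotient.out`) of the left cosets of `H`
in `G` (a left transversal). -/
noncomputable def relTr (H : Subgroup K4) {V : Type} [AddCommMonoid V] [SMul K4 V]
    (v : V) : V :=
  ∑ᶠ c : K4 ⧸ H, Quotient.out c • v

/-!
For `Hᵢ = ⟨g⟩` the operator `g - 1` on `V_{-(2n+1)}` is `X`, `Y` or `X + Y` (as `XY = 0`).
These three operators have the same kernel, because `Y = S⁺X`, `X = S⁻Y` and `Y = P(X + Y)` for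
the shifts `S^±` and the partial-sum map `P` on the socle `⟨b₀, …, bₙ⟩`; hence `V^{Hᵢ} = V^G`. On `G`-fixed vectors the
relative trace is multiplication by the index `2`, which vanishes in characteristic `2`.
-/

open Module

lemma IsKleinFour.index_zpowers {G : Type*} [Group G] [IsKleinFour G] {g : G} (hg : g ≠ 1) :
    (Subgroup.zpowers g).index = 2 := by
  have h := (Subgroup.zpowers g).card_mul_index
  rw [Nat.card_zpowers, orderOf_eq_prime (by rw [sq, IsKleinFour.mul_self]) hg,
    IsKleinFour.card_four] at h
  omega

lemma relTr_eq_index_smul {V : Type} [AddCommMonoid V] [SMul K4 V] (H : Subgroup K4) {v : V}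
    (hv : ∀ g : K4, g • v = v) : relTr H v = H.index • v := by
  have : Fintype (K4 ⧸ H) := Fintype.ofFinite _
  simp [relTr, hv, finsum_eq_sum_of_fintype, Subgroup.index_eq_card, Nat.card_eq_fintype_card]

lemma relTr_zpowers_eq_zero (k : Type) [Ring k] [CharP k 2] {V : Type} [AddCommGroup V]
    [Module k V] [SMul K4 V] {g : K4} (hg : g ≠ 1) {v : V} (hv : ∀ g : K4, g • v = v) :
    relTr (Subgroup.zpowers g) v = 0 := by
  rw [relTr_eq_index_smul _ hv, IsKleinFour.index_zpowers hg, ← Nat.cast_smul_eq_nsmul k,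
    Nat.cast_ofNat, CharTwo.two_eq_zero, zero_smul]

section Vneg

variable {k : Type} [Field k] {n : ℕ} {V : Type} [AddCommGroup V] [Module k V]
  (B : Basis (Fin n ⊕ Fin (n + 1)) k V)

noncomputable def vnegX : V →ₗ[k] V :=
  B.constr k (Sum.elim (fun i => B (Sum.inr i.castSucc)) 0)

noncomputable def vnegY : V →ₗ[k] V :=
  B.constr k (Sum.elim (fun i => B (Sum.inr i.succ)) 0)

noncomputable def shiftUp : V →ₗ[k] V :=
  B.constr k (Sum.elim 0 (Fin.lastCases 0 fun j => B (Sum.inr j.succ)))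

noncomputable def shiftDown : V →ₗ[k] V :=
  B.constr k (Sum.elim 0 (Fin.cases 0 fun j => B (Sum.inr j.castSucc)))

noncomputable def partialSum : V →ₗ[k] V :=
  B.constr k (Sum.elim 0 fun j => ∑ l ∈ Finset.Iic j, B (Sum.inr l))

lemma shiftUp_comp_vnegX : shiftUp B ∘ₗ vnegX B = vnegY B := by
  refine B.ext ?_
  rintro (i | j) <;> simp [shiftUp, vnegX, vnegY]

lemma shiftDown_comp_vnegY : shiftDown B ∘ₗ vnegY B = vnegX B := by
  refine B.ext ?_
  rintro (i | j) <;> simp [shiftDown, vnegX, vnegY]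

lemma vnegX_comp_vnegY : vnegX B ∘ₗ vnegY B = 0 := by
  refine B.ext ?_
  rintro (i | j) <;> simp [vnegX, vnegY]

lemma partialSum_comp_add [CharP k 2] : partialSum B ∘ₗ (vnegX B + vnegY B) = vnegY B := by
  refine B.ext ?_
  rintro (i | j)
  · have hIic : Finset.Iic i.succ = insert i.succ (Finset.Iic i.castSucc) := by
      ext l
      simp only [Finset.mem_Iic, Finset.mem_insert, Fin.le_def, Fin.ext_iff, Fin.val_succ,
        Fin.val_castSucc]
      omega
    simp only [LinearMap.comp_apply, LinearMap.add_apply, vnegX, vnegY, partialSum,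
      Basis.constr_basis, Sum.elim_inl, Sum.elim_inr, map_add]
    rw [hIic, Finset.sum_insert (by simp), add_left_comm, ← two_smul k,
      CharTwo.two_eq_zero, zero_smul, add_zero]
  · simp [partialSum, vnegX, vnegY]

end Vneg

namespace IsVneg

variable {k : Type} [Field k] {n : ℕ} {V : Type} [AddCommGroup V] [Module k V]
  [DistribMulAction K4 V] [SMulCommClass K4 k V] {B : Basis (Fin n ⊕ Fin (n + 1)) k V}

lemma sg_smul (hV : IsVneg k n V B) (v : V) : sg • v = v + vnegX B v := by
  have h : DistribSMul.toLinearMap k V sg = LinearMap.id + vnegX B := by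
    refine B.ext ?_
    rintro (i | j)
    · simp [vnegX, hV.1 i]
    · simp [vnegX, hV.2.2.1 j]
  simpa using LinearMap.congr_fun h v

lemma tg_smul (hV : IsVneg k n V B) (v : V) : tg • v = v + vnegY B v := by
  have h : DistribSMul.toLinearMap k V tg = LinearMap.id + vnegY B := by
    refine B.ext ?_
    rintro (i | j)
    · simp [vnegY, hV.2.1 i]
    · simp [vnegY, hV.2.2.2 j]
  simpa using LinearMap.congr_fun h v

lemma sg_mul_tg_smul (hV : IsVneg k n V B) (v : V) :
    (sg * tg) • v = v + (vnegX B + vnegY B) v := by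
  have hXY : vnegX B (vnegY B v) = 0 := LinearMap.congr_fun (vnegX_comp_vnegY B) v
  rw [mul_smul, hV.tg_smul, smul_add, hV.sg_smul, hV.sg_smul, hXY, LinearMap.add_apply]
  abel

lemma smul_eq_self (hV : IsVneg k n V B) {v : V} (hX : vnegX B v = 0) (hY : vnegY B v = 0)
    (g : K4) : g • v = v := by
  have hσ : sg • v = v := by rw [hV.sg_smul, hX, add_zero]
  have hτ : tg • v = v := by rw [hV.tg_smul, hY, add_zero]
  obtain rfl | rfl | rfl | rfl : g = 1 ∨ g = sg ∨ g = tg ∨ g = sg * tg := by revert g; decide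
  exacts [one_smul _ v, hσ, hτ, by rw [mul_smul, hτ, hσ]]

lemma forall_smul_eq_self [CharP k 2] (hV : IsVneg k n V B) {g : K4}
    (hg : g = sg ∨ g = tg ∨ g = sg * tg) {v : V} (hv : g • v = v) (g' : K4) : g' • v = v := by
  rcases hg with rfl | rfl | rfl
  · have hX : vnegX B v = 0 := by rwa [hV.sg_smul, add_eq_left] at hv
    refine hV.smul_eq_self hX ?_ g'
    rw [← shiftUp_comp_vnegX, LinearMap.comp_apply, hX, map_zero]
  · have hY : vnegY B v = 0 := by rwa [hV.tg_smul, add_eq_left] at hv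
    refine hV.smul_eq_self ?_ hY g'
    rw [← shiftDown_comp_vnegY, LinearMap.comp_apply, hY, map_zero]
  · have hXY : (vnegX B + vnegY B) v = 0 := by rwa [hV.sg_mul_tg_smul, add_eq_left] at hv
    have hY : vnegY B v = 0 := by
      rw [← partialSum_comp_add, LinearMap.comp_apply, hXY, map_zero]
    rw [LinearMap.add_apply, hY, add_zero] at hXY
    exact hV.smul_eq_self hXY hY g'

end IsVneg

/-- For every `n ≥ 0`, the sum over `i = 1, 2, 3` of the images of the relative trace maps
`Tr^G_{Hᵢ} : (V_{-(2n+1)})^{Hᵢ} → (V_{-(2n+1)})^G` is the zero subspace. -/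
theorem stmt5 (k : Type) [Field k] [CharP k 2] (n : ℕ)
    (V : Type) [AddCommGroup V] [Module k V] [DistribMulAction K4 V] [SMulCommClass K4 k V]
    (B : Module.Basis (Fin n ⊕ Fin (n + 1)) k V) (hV : IsVneg k n V B) :
    Submodule.span k
      ((fun v : V => relTr H1 v) '' {v : V | ∀ h ∈ H1, h • v = v} ∪
        (fun v : V => relTr H2 v) '' {v : V | ∀ h ∈ H2, h • v = v} ∪
        (fun v : V => relTr H3 v) '' {v : V | ∀ h ∈ H3, h • v = v}) = ⊥ := by
  have key (g : K4) (hg : g = sg ∨ g = tg ∨ g = sg * tg) (v : V)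
      (hv : ∀ h ∈ Subgroup.zpowers g, h • v = v) : relTr (Subgroup.zpowers g) v = 0 := by
    have hg1 : g ≠ 1 := by rcases hg with rfl | rfl | rfl <;> decide
    exact relTr_zpowers_eq_zero k hg1 (hV.forall_smul_eq_self hg (hv g (Subgroup.mem_zpowers g)))
  rw [Submodule.span_eq_bot]
  rintro _ ((⟨v, hv, rfl⟩ | ⟨v, hv, rfl⟩) | ⟨v, hv, rfl⟩)
  exacts [key sg (.inl rfl) v hv, key tg (.inr (.inl rfl)) v hv, key _ (.inr (.inr rfl)) v hv]
end

section
/- There exists a surjective kG-module homomorphism π : Q_σ ⊕ Q_τ ⊕ Q_{στ} → V₃ which splits on restriction to each of the subgroups H₁, H₂, H₃, and whose kernel is isomorphic as a kG-module to V_{−3}. -/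
/-- `V` carries the structure of the module `V_{2n+1}`: the basis vector `B (Sum.inl j)`
is `a_j` (for `0 ≤ j ≤ n`) and `B (Sum.inr i)` is `b_{i+1}` (for `0 ≤ i ≤ n-1`), with
`X·aᵢ = bᵢ` (`1 ≤ i ≤ n`), `Y·aᵢ = b_{i+1}` (`0 ≤ i ≤ n-1`), `X·a₀ = Y·aₙ = 0` and
`X·bⱼ = Y·bⱼ = 0`, i.e. (with `σ = 1 + X`, `τ = 1 + Y`) `σ·aᵢ = aᵢ + bᵢ` for `i ≥ 1`,
`σ·a₀ = a₀`, `τ·aᵢ = aᵢ + b_{i+1}` for `i ≤ n-1`, `τ·aₙ = aₙ`, and `σ, τ` fix the `bⱼ`. -/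
def IsVpos (k : Type) [Field k] (n : ℕ) (V : Type) [AddCommGroup V] [Module k V]
    [DistribMulAction K4 V] (B : Module.Basis (Fin (n + 1) ⊕ Fin n) k V) : Prop :=
  (sg • B (Sum.inl 0) = B (Sum.inl 0)) ∧
  (∀ i : Fin n, sg • B (Sum.inl i.succ) = B (Sum.inl i.succ) + B (Sum.inr i)) ∧
  (∀ i : Fin n, tg • B (Sum.inl i.castSucc) = B (Sum.inl i.castSucc) + B (Sum.inr i)) ∧
  (tg • B (Sum.inl (Fin.last n)) = B (Sum.inl (Fin.last n))) ∧
  (∀ j : Fin n, sg • B (Sum.inr j) = B (Sum.inr j)) ∧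
  (∀ j : Fin n, tg • B (Sum.inr j) = B (Sum.inr j))

/-- `V` carries the structure of the module `Q_σ`: basis `r = B 0`, `s = B 1` with
`Y·r = s`, `X·r = X·s = Y·s = 0` (so `σ` acts trivially). -/
def IsQsig (k : Type) [Field k] (V : Type) [AddCommGroup V] [Module k V]
    [DistribMulAction K4 V] (B : Module.Basis (Fin 2) k V) : Prop :=
  (sg • B 0 = B 0) ∧ (tg • B 0 = B 0 + B 1) ∧ (sg • B 1 = B 1) ∧ (tg • B 1 = B 1)

/-- `V` carries the structure of the module `Q_τ`: basis `r = B 0`, `s = B 1` with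
`X·r = s`, `Y·r = X·s = Y·s = 0` (so `τ` acts trivially). -/
def IsQtau (k : Type) [Field k] (V : Type) [AddCommGroup V] [Module k V]
    [DistribMulAction K4 V] (B : Module.Basis (Fin 2) k V) : Prop :=
  (sg • B 0 = B 0 + B 1) ∧ (tg • B 0 = B 0) ∧ (sg • B 1 = B 1) ∧ (tg • B 1 = B 1)

/-- `V` carries the structure of the module `Q_{στ}`: basis `r = B 0`, `s = B 1` with
`X·r = Y·r = s`, `X·s = Y·s = 0` (so `στ` acts trivially). -/
def IsQst (k : Type) [Field k] (V : Type) [AddCommGroup V] [Module k V]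
    [DistribMulAction K4 V] (B : Module.Basis (Fin 2) k V) : Prop :=
  (sg • B 0 = B 0 + B 1) ∧ (tg • B 0 = B 0 + B 1) ∧ (sg • B 1 = B 1) ∧ (tg • B 1 = B 1)

/-!
Send the generator `r` of `Q_H` to an `H`-fixed vector of `V₃`: `a₀` for `⟨σ⟩`, `a₁` for `⟨τ⟩`
and `a₀ + a₁` for `⟨στ⟩`. Restricted to `Hᵢ`, `V₃` is a free `kHᵢ`-module of rank one plus a
line of `Hᵢ`-fixed vectors; the free summand lifts to a summand `Q_H` on which `Hᵢ` acts freely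
and the fixed line to the generator of `Q_{Hᵢ}`, so `π` splits over `Hᵢ`.
In characteristic 2 the kernel contains `r_σ + r_τ + r_στ`, `s_τ + s_στ` and `s_σ + s_στ`,
which span a copy of `V₋₃`; by dimension count (`6 = 3 + 3`) this is the whole kernel.
-/

theorem map_smul_of_mem_closure {G M N : Type*} [Group G] [MulAction G M] [MulAction G N]
    {f : M → N} {S : Set G} (hS : ∀ g ∈ S, ∀ x, f (g • x) = g • f x) {g : G}
    (hg : g ∈ Subgroup.closure S) (x : M) : f (g • x) = g • f x := by
  induction hg using Subgroup.closure_induction generalizing x with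
  | mem g hg => exact hS g hg x
  | one => simp only [one_smul]
  | mul g h _ _ ihg ihh => rw [mul_smul, ihg, ihh, mul_smul]
  | inv g _ ih => rw [eq_inv_smul_iff, ← ih, smul_inv_smul]

theorem Module.Basis.map_smul_of_forall_basis {G ι R M N : Type*} [Monoid G] [Semiring R]
    [AddCommMonoid M] [Module R M] [DistribMulAction G M] [SMulCommClass G R M]
    [AddCommMonoid N] [Module R N] [DistribMulAction G N] [SMulCommClass G R N]
    (b : Module.Basis ι R M) (f : M →ₗ[R] N) {g : G} (h : ∀ i, f (g • b i) = g • f (b i))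
    (x : M) : f (g • x) = g • f x :=
  LinearMap.congr_fun
    (b.ext h : f ∘ₗ DistribSMul.toLinearMap R M g = DistribSMul.toLinearMap R N g ∘ₗ f) x

theorem Module.Basis.map_smul_of_mem_closure {G ι R M N : Type*} [Group G] [Semiring R]
    [AddCommMonoid M] [Module R M] [DistribMulAction G M] [SMulCommClass G R M]
    [AddCommMonoid N] [Module R N] [DistribMulAction G N] [SMulCommClass G R N]
    (b : Module.Basis ι R M) (f : M →ₗ[R] N) {S : Set G}
    (hS : ∀ g ∈ S, ∀ i, f (g • b i) = g • f (b i)) {g : G} (hg : g ∈ Subgroup.closure S)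
    (x : M) : f (g • x) = g • f x :=
  _root_.map_smul_of_mem_closure (fun g hg => b.map_smul_of_forall_basis f (hS g hg)) hg x

theorem Module.Basis.leftInverse_of_apply_basis {ι R M N : Type*} [Semiring R]
    [AddCommMonoid M] [Module R M] [AddCommMonoid N] [Module R N] (b : Module.Basis ι R M)
    {f : N →ₗ[R] M} {g : M →ₗ[R] N} (h : ∀ i, f (g (b i)) = b i) : Function.LeftInverse f g :=
  LinearMap.congr_fun (b.ext h : f ∘ₗ g = .id)

theorem LinearMap.range_eq_ker_of_finrank_add_eq {K U M N : Type*} [DivisionRing K]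
    [AddCommGroup U] [Module K U] [AddCommGroup M] [Module K M] [FiniteDimensional K M]
    [AddCommGroup N] [Module K N] {ι : U →ₗ[K] M} {π : M →ₗ[K] N}
    (hι : Function.Injective ι) (hπ : Function.Surjective π) (hπι : π ∘ₗ ι = 0)
    (hdim : Module.finrank K U + Module.finrank K N = Module.finrank K M) :
    LinearMap.range ι = LinearMap.ker π := by
  refine Submodule.eq_of_le_of_finrank_eq (LinearMap.range_le_ker_iff.mpr hπι) ?_
  have := LinearMap.finrank_range_add_finrank_ker π
  rw [LinearMap.range_eq_top.mpr hπ, finrank_top] at this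
  rw [LinearMap.finrank_range_of_inj hι]
  omega

theorem add_self_eq_zero_of_charTwo (k : Type*) {M : Type*} [Ring k] [CharP k 2]
    [AddCommGroup M] [Module k M] (x : M) : x + x = 0 := by
  rw [← two_smul k x, CharTwo.two_eq_zero, zero_smul]

theorem K4_cases (g : K4) : g = 1 ∨ g = sg ∨ g = tg ∨ g = sg * tg := by
  revert g; decide

theorem closure_sg_tg_eq_top : Subgroup.closure {sg, tg} = ⊤ := by
  refine eq_top_iff.mpr fun g _ => ?_
  have hsg : sg ∈ Subgroup.closure {sg, tg} := Subgroup.subset_closure (by simp)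
  have htg : tg ∈ Subgroup.closure {sg, tg} := Subgroup.subset_closure (by simp)
  rcases K4_cases g with rfl | rfl | rfl | rfl
  exacts [one_mem _, hsg, htg, mul_mem hsg htg]

theorem Module.Basis.map_smul_of_smul_sg_tg {ι R M N : Type*} [Semiring R]
    [AddCommMonoid M] [Module R M] [DistribMulAction K4 M] [SMulCommClass K4 R M]
    [AddCommMonoid N] [Module R N] [DistribMulAction K4 N] [SMulCommClass K4 R N]
    (b : Module.Basis ι R M) (f : M →ₗ[R] N) (hsg : ∀ i, f (sg • b i) = sg • f (b i))
    (htg : ∀ i, f (tg • b i) = tg • f (b i)) (g : K4) (x : M) : f (g • x) = g • f x := by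
  refine b.map_smul_of_mem_closure f (S := {sg, tg}) ?_
    (closure_sg_tg_eq_top ▸ Subgroup.mem_top g) x
  rintro g (rfl | rfl)
  exacts [hsg, htg]

theorem Module.Basis.map_smul_of_mem_zpowers {G ι R M N : Type*} [Group G] [Semiring R]
    [AddCommMonoid M] [Module R M] [DistribMulAction G M] [SMulCommClass G R M]
    [AddCommMonoid N] [Module R N] [DistribMulAction G N] [SMulCommClass G R N]
    (b : Module.Basis ι R M) (f : M →ₗ[R] N) {g : G} (hg : ∀ i, f (g • b i) = g • f (b i))
    {h : G} (hh : h ∈ Subgroup.zpowers g) (x : M) : f (h • x) = h • f x := by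
  rw [Subgroup.zpowers_eq_closure] at hh
  exact b.map_smul_of_mem_closure f (by simpa using hg) hh x

noncomputable section Construction

open Module

variable {k : Type} [Field k] {V Qs Qt Qst W : Type}
  [AddCommGroup V] [Module k V] [AddCommGroup Qs] [Module k Qs] [AddCommGroup Qt] [Module k Qt]
  [AddCommGroup Qst] [Module k Qst] [AddCommGroup W] [Module k W]
  (B : Basis (Fin 2 ⊕ Fin 1) k V) (Bs : Basis (Fin 2) k Qs) (Bt : Basis (Fin 2) k Qt)
  (Bst : Basis (Fin 2) k Qst) (BW : Basis (Fin 1 ⊕ Fin 2) k W)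

def projV3 : Qs × Qt × Qst →ₗ[k] V :=
  (Bs.constr k ![B (.inl 0), B (.inr 0)]).coprod ((Bt.constr k ![B (.inl 1), B (.inr 0)]).coprod
    (Bst.constr k ![B (.inl 0) + B (.inl 1), B (.inr 0)]))

def liftH1 : V →ₗ[k] Qs × Qt × Qst :=
  B.constr k (Sum.elim ![(Bs 0, 0, 0), (0, Bt 0, 0)] ![(0, Bt 1, 0)])

def liftH2 : V →ₗ[k] Qs × Qt × Qst :=
  B.constr k (Sum.elim ![(Bs 0, 0, 0), (0, Bt 0, 0)] ![(Bs 1, 0, 0)])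

def liftH3 : V →ₗ[k] Qs × Qt × Qst :=
  B.constr k (Sum.elim ![(Bs 0, 0, 0), (Bs 0, 0, Bst 0)] ![(Bs 1, 0, 0)])

def inclVneg3 : W →ₗ[k] Qs × Qt × Qst :=
  BW.constr k (Sum.elim ![(Bs 0, Bt 0, Bst 0)] ![(0, Bt 1, Bst 1), (Bs 1, 0, Bst 1)])

def retrVneg3 : Qs × Qt × Qst →ₗ[k] W :=
  (Bs.constr k ![BW (.inl 0), BW (.inr 1)]).coprod ((Bt.constr k ![0, BW (.inr 0)]).coprod 0)

theorem projV3_liftH1 : Function.LeftInverse (projV3 B Bs Bt Bst) (liftH1 B Bs Bt) :=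
  B.leftInverse_of_apply_basis fun i => by
    rcases i with i | i <;> fin_cases i <;> simp [projV3, liftH1]

theorem projV3_liftH2 : Function.LeftInverse (projV3 B Bs Bt Bst) (liftH2 B Bs Bt) :=
  B.leftInverse_of_apply_basis fun i => by
    rcases i with i | i <;> fin_cases i <;> simp [projV3, liftH2]

theorem projV3_liftH3 [CharP k 2] :
    Function.LeftInverse (projV3 B Bs Bt Bst) (liftH3 B Bs Bst) :=
  B.leftInverse_of_apply_basis fun i => by
    rcases i with i | i <;> fin_cases i <;>
      simp [projV3, liftH3, ← add_assoc, add_self_eq_zero_of_charTwo k]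

theorem projV3_comp_inclVneg3 [CharP k 2] : projV3 B Bs Bt Bst ∘ₗ inclVneg3 Bs Bt Bst BW = 0 := by
  refine BW.ext fun i => ?_
  rcases i with i | i <;> fin_cases i
  · simpa [projV3, inclVneg3, ← add_assoc] using
      add_self_eq_zero_of_charTwo k (B (.inl 0) + B (.inl 1))
  all_goals simp [projV3, inclVneg3, add_self_eq_zero_of_charTwo k]

theorem retrVneg3_inclVneg3 :
    Function.LeftInverse (retrVneg3 Bs Bt BW) (inclVneg3 Bs Bt Bst BW) :=
  BW.leftInverse_of_apply_basis fun i => by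
    rcases i with i | i <;> fin_cases i <;> simp [retrVneg3, inclVneg3]

theorem range_inclVneg3_eq_ker_projV3 [CharP k 2] :
    LinearMap.range (inclVneg3 Bs Bt Bst BW) = LinearMap.ker (projV3 B Bs Bt Bst) := by
  have := Module.Finite.of_basis Bs
  have := Module.Finite.of_basis Bt
  have := Module.Finite.of_basis Bst
  refine LinearMap.range_eq_ker_of_finrank_add_eq
    (retrVneg3_inclVneg3 Bs Bt Bst BW).injective
    (projV3_liftH1 B Bs Bt Bst).surjective (projV3_comp_inclVneg3 B Bs Bt Bst BW) ?_
  simp [Module.finrank_prod, Module.finrank_eq_card_basis B, Module.finrank_eq_card_basis BW,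
    Module.finrank_eq_card_basis Bs, Module.finrank_eq_card_basis Bt,
    Module.finrank_eq_card_basis Bst]

theorem IsVpos.smul_basis_one [DistribMulAction K4 V] (hV : IsVpos k 1 V B) :
    sg • B (.inl 0) = B (.inl 0) ∧ tg • B (.inl 0) = B (.inl 0) + B (.inr 0) ∧
      sg • B (.inl 1) = B (.inl 1) + B (.inr 0) ∧ tg • B (.inl 1) = B (.inl 1) ∧
      sg • B (.inr 0) = B (.inr 0) ∧ tg • B (.inr 0) = B (.inr 0) :=
  ⟨hV.1, hV.2.2.1 0, hV.2.1 0, hV.2.2.2.1, hV.2.2.2.2.1 0, hV.2.2.2.2.2 0⟩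

theorem IsVneg.smul_basis_one [DistribMulAction K4 W] (hW : IsVneg k 1 W BW) :
    sg • BW (.inl 0) = BW (.inl 0) + BW (.inr 0) ∧ tg • BW (.inl 0) = BW (.inl 0) + BW (.inr 1) ∧
      sg • BW (.inr 0) = BW (.inr 0) ∧ tg • BW (.inr 0) = BW (.inr 0) ∧
      sg • BW (.inr 1) = BW (.inr 1) ∧ tg • BW (.inr 1) = BW (.inr 1) :=
  ⟨hW.1 0, hW.2.1 0, hW.2.2.1 0, hW.2.2.2 0, hW.2.2.1 1, hW.2.2.2 1⟩

section Equivariance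

variable [DistribMulAction K4 V] [SMulCommClass K4 k V] [DistribMulAction K4 Qs]
  [SMulCommClass K4 k Qs] [DistribMulAction K4 Qt] [SMulCommClass K4 k Qt]
  [DistribMulAction K4 Qst] [SMulCommClass K4 k Qst] [DistribMulAction K4 W]
  [SMulCommClass K4 k W]

theorem projV3_smul (hV : IsVpos k 1 V B) (hQs : IsQsig k Qs Bs) (hQt : IsQtau k Qt Bt)
    (hQst : IsQst k Qst Bst) (g : K4) (q : Qs × Qt × Qst) :
    projV3 B Bs Bt Bst (g • q) = g • projV3 B Bs Bt Bst q := by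
  rw [IsQsig] at hQs; rw [IsQtau] at hQt; rw [IsQst] at hQst
  refine (Bs.prod (Bt.prod Bst)).map_smul_of_smul_sg_tg _ ?_ ?_ g q <;>
    rintro (i | i | i) <;> fin_cases i <;>
    simp [projV3, hQs, hQt, hQst, hV.smul_basis_one, add_comm, add_left_comm]

theorem liftH1_smul (hV : IsVpos k 1 V B) (hQs : IsQsig k Qs Bs) (hQt : IsQtau k Qt Bt)
    {h : K4} (hh : h ∈ H1) (v : V) :
    liftH1 B Bs Bt (h • v) = (h • liftH1 B Bs Bt v : Qs × Qt × Qst) := by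
  rw [IsQsig] at hQs; rw [IsQtau] at hQt
  refine B.map_smul_of_mem_zpowers _ ?_ hh v
  rintro (i | i) <;> fin_cases i <;> simp [liftH1, hQs, hQt, hV.smul_basis_one]

theorem liftH2_smul (hV : IsVpos k 1 V B) (hQs : IsQsig k Qs Bs) (hQt : IsQtau k Qt Bt)
    {h : K4} (hh : h ∈ H2) (v : V) :
    liftH2 B Bs Bt (h • v) = (h • liftH2 B Bs Bt v : Qs × Qt × Qst) := by
  rw [IsQsig] at hQs; rw [IsQtau] at hQt
  refine B.map_smul_of_mem_zpowers _ ?_ hh v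
  rintro (i | i) <;> fin_cases i <;> simp [liftH2, hQs, hQt, hV.smul_basis_one]

theorem liftH3_smul [CharP k 2] (hV : IsVpos k 1 V B) (hQs : IsQsig k Qs Bs)
    (hQst : IsQst k Qst Bst) {h : K4} (hh : h ∈ H3) (v : V) :
    liftH3 B Bs Bst (h • v) = (h • liftH3 B Bs Bst v : Qs × Qt × Qst) := by
  rw [IsQsig] at hQs; rw [IsQst] at hQst
  refine B.map_smul_of_mem_zpowers _ ?_ hh v
  rintro (i | i) <;> fin_cases i <;>
    simp [liftH3, mul_smul, hQs, hQst, hV.smul_basis_one, add_assoc, add_self_eq_zero_of_charTwo k,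
      Prod.mk_zero_zero]

theorem inclVneg3_smul (hW : IsVneg k 1 W BW) (hQs : IsQsig k Qs Bs) (hQt : IsQtau k Qt Bt)
    (hQst : IsQst k Qst Bst) (g : K4) (w : W) :
    inclVneg3 Bs Bt Bst BW (g • w) = g • inclVneg3 Bs Bt Bst BW w := by
  rw [IsQsig] at hQs; rw [IsQtau] at hQt; rw [IsQst] at hQst
  refine BW.map_smul_of_smul_sg_tg _ ?_ ?_ g w <;>
    rintro (i | i) <;> fin_cases i <;> simp [inclVneg3, hQs, hQt, hQst, hW.smul_basis_one]

end Equivariance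

end Construction

/-- There is a surjective `kG`-homomorphism `π : Q_σ ⊕ Q_τ ⊕ Q_{στ} → V₃` which splits on
restriction to each of `H₁, H₂, H₃` and whose kernel is isomorphic as a `kG`-module to
`V₋₃`. Here `V₃ = V_{2·1+1}` and `W = V₋₃ = V_{-(2·1+1)}` realizes the kernel via an
injective equivariant map with range `ker π`. -/
theorem stmt8 (k : Type) [Field k] [CharP k 2]
    (V : Type) [AddCommGroup V] [Module k V] [DistribMulAction K4 V] [SMulCommClass K4 k V]
    (B : Module.Basis (Fin 2 ⊕ Fin 1) k V) (hV : IsVpos k 1 V B)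
    (Qs : Type) [AddCommGroup Qs] [Module k Qs] [DistribMulAction K4 Qs]
    [SMulCommClass K4 k Qs] (Bs : Module.Basis (Fin 2) k Qs) (hQs : IsQsig k Qs Bs)
    (Qt : Type) [AddCommGroup Qt] [Module k Qt] [DistribMulAction K4 Qt]
    [SMulCommClass K4 k Qt] (Bt : Module.Basis (Fin 2) k Qt) (hQt : IsQtau k Qt Bt)
    (Qst : Type) [AddCommGroup Qst] [Module k Qst] [DistribMulAction K4 Qst]
    [SMulCommClass K4 k Qst] (Bst : Module.Basis (Fin 2) k Qst) (hQst : IsQst k Qst Bst)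
    (W : Type) [AddCommGroup W] [Module k W] [DistribMulAction K4 W] [SMulCommClass K4 k W]
    (BW : Module.Basis (Fin 1 ⊕ Fin 2) k W) (hW : IsVneg k 1 W BW) :
    ∃ π : (Qs × Qt × Qst) →ₗ[k] V,
      Function.Surjective π ∧
      (∀ (g : K4) (q : Qs × Qt × Qst),
        π (g • q.1, g • q.2.1, g • q.2.2) = g • π q) ∧
      (∀ H ∈ ({H1, H2, H3} : Set (Subgroup K4)),
        ∃ s : V →ₗ[k] (Qs × Qt × Qst),
          (∀ v : V, π (s v) = v) ∧
          (∀ h ∈ H, ∀ v : V, s (h • v) = (h • (s v).1, h • (s v).2.1, h • (s v).2.2))) ∧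
      ∃ ι : W →ₗ[k] (Qs × Qt × Qst),
        Function.Injective ι ∧
        (∀ (g : K4) (w : W), ι (g • w) = (g • (ι w).1, g • (ι w).2.1, g • (ι w).2.2)) ∧
        LinearMap.range ι = LinearMap.ker π := by
  refine ⟨projV3 B Bs Bt Bst, (projV3_liftH1 B Bs Bt Bst).surjective,
    fun g q => projV3_smul B Bs Bt Bst hV hQs hQt hQst g q, ?_, inclVneg3 Bs Bt Bst BW,
    (retrVneg3_inclVneg3 Bs Bt Bst BW).injective,
    fun g w => inclVneg3_smul Bs Bt Bst BW hW hQs hQt hQst g w,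
    range_inclVneg3_eq_ker_projV3 B Bs Bt Bst BW⟩
  simp only [Set.mem_insert_iff, Set.mem_singleton_iff]
  rintro H (rfl | rfl | rfl)
  · exact ⟨liftH1 B Bs Bt, projV3_liftH1 B Bs Bt Bst,
      fun h hh v => liftH1_smul B Bs Bt hV hQs hQt hh v⟩
  · exact ⟨liftH2 B Bs Bt, projV3_liftH2 B Bs Bt Bst,
      fun h hh v => liftH2_smul B Bs Bt hV hQs hQt hh v⟩
  · exact ⟨liftH3 B Bs Bst, projV3_liftH3 B Bs Bt Bst,
      fun h hh v => liftH3_smul B Bs Bst hV hQs hQst hh v⟩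
end

section
/- Let θ(x) = Σ_{i=0}^n λᵢ x^{n−i} ∈ k[x] be a monic polynomial of degree n ≥ 1 which is a power of an irreducible polynomial and which is neither xⁿ nor (x+1)ⁿ. Then there exists a surjective kG-module homomorphism π : (kG)ⁿ → V_{2n,θ} which splits on restriction to each of the subgroups H₁, H₂, H₃, and whose kernel is isomorphic as a kG-module to V_{2n,θ}. -/
/-- `V` carries the structure of the module `V_{2n,θ}` for a monic polynomial
`θ(x) = Σ_{i=0}^n λᵢ x^{n-i}` of degree `n ≥ 1`: the basis vector `B (Sum.inl i)` is
`a_{i+1}` and `B (Sum.inr i)` is `b_{i+1}` (for `0 ≤ i ≤ n-1`), with `Y·aᵢ = bᵢ` for all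
`i`, `X·aᵢ = b_{i-1}` for `2 ≤ i ≤ n`, `X·a₁ = Σ_{i=1}^n λᵢ bᵢ` (where `λᵢ = θ.coeff (n-i)`),
and `X·bⱼ = Y·bⱼ = 0`. -/
def IsVtheta (k : Type) [Field k] (n : ℕ) (hn : 0 < n) (θ : Polynomial k) (V : Type)
    [AddCommGroup V] [Module k V] [DistribMulAction K4 V]
    (B : Module.Basis (Fin n ⊕ Fin n) k V) : Prop :=
  (∀ i : Fin n, tg • B (Sum.inl i) = B (Sum.inl i) + B (Sum.inr i)) ∧
  (∀ i j : Fin n, (j : ℕ) + 1 = (i : ℕ) →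
    sg • B (Sum.inl i) = B (Sum.inl i) + B (Sum.inr j)) ∧
  (sg • B (Sum.inl ⟨0, hn⟩) = B (Sum.inl ⟨0, hn⟩) +
    ∑ j : Fin n, θ.coeff (n - 1 - (j : ℕ)) • B (Sum.inr j)) ∧
  (∀ j : Fin n, sg • B (Sum.inr j) = B (Sum.inr j)) ∧
  (∀ j : Fin n, tg • B (Sum.inr j) = B (Sum.inr j))

/-!
Write `a i = B (Sum.inl i)` and `b i = B (Sum.inr i)`. Every `x ∈ G` fixes the `b j` and sends
`a m` to `a m + ∑ j, D x j m • b j`, where `D σ = P` is a companion matrix of `θ`, `D τ = 1` and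
`D (στ) = P + 1`. Take `π : (kG)ⁿ → V`, `e i ↦ a i`. A power of an irreducible polynomial with a
root `r` is `(x - r)ⁿ`, so `θ(0) ≠ 0 ≠ θ(1)`, i.e. `P` and `P + 1` are invertible. For each
`H = ⟨x⟩`, the map `a m ↦ e m`, `b j ↦ ∑ i, (D x)⁻¹ i j • (x - 1) • e i` is then an
`H`-equivariant section of `π`. The map `v ↦ (i, x) ↦ (b-coordinate i of x⁻¹ • v)` embeds `V`
equivariantly into `(kG)ⁿ`; `π` kills it because `∑ₓ D x = 0` and `∑ₓ (D x)² = 0` in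
characteristic 2, and its image is all of `ker π` since `4n = 2n + 2n`.
-/

open Matrix Polynomial

noncomputable section

theorem LinearMap.range_eq_ker_of_finrank_eq {K U E W : Type*} [Field K] [AddCommGroup U]
    [Module K U] [AddCommGroup E] [Module K E] [FiniteDimensional K E] [AddCommGroup W]
    [Module K W] {ι : U →ₗ[K] E} {π : E →ₗ[K] W} (hι : Function.Injective ι)
    (hπ : Function.Surjective π) (hπι : ∀ u, π (ι u) = 0)
    (hdim : Module.finrank K E = Module.finrank K U + Module.finrank K W) :
    LinearMap.range ι = LinearMap.ker π := by
  refine Submodule.eq_of_le_of_finrank_eq (by rintro _ ⟨u, rfl⟩; exact hπι u) ?_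
  have := LinearMap.finrank_range_add_finrank_ker π
  rw [LinearMap.range_eq_top.mpr hπ, finrank_top] at this
  have : FiniteDimensional K U := Module.Finite.of_injective ι hι
  rw [LinearMap.finrank_range_of_inj hι]
  omega

namespace K4

theorem mul_self (g : K4) : g * g = 1 := by
  revert g; decide

theorem inv_eq_self (g : K4) : g⁻¹ = g := by
  revert g; decide

theorem sum_eq {M : Type*} [AddCommMonoid M] (f : K4 → M) :
    ∑ x, f x = f 1 + f sg + f tg + f (sg * tg) := by
  rw [show (Finset.univ : Finset K4) = {1, sg, tg, sg * tg} by decide,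
    Finset.sum_insert (by decide), Finset.sum_insert (by decide),
    Finset.sum_pair (by decide), add_assoc, add_assoc]

end K4

section FreeModule

variable {k G ι V : Type*} [Field k] [Group G]

variable (k ι) in
/-- The action of `g` on the free module `(kG)^ι`, realised as `ι → G → k`. -/
def leftTranslate (g : G) : (ι → G → k) →ₗ[k] (ι → G → k) where
  toFun F i x := F i (g⁻¹ * x)
  map_add' _ _ := rfl
  map_smul' _ _ := rfl

@[simp]
theorem leftTranslate_apply (g : G) (F : ι → G → k) (i : ι) (x : G) :
    leftTranslate k ι g F i x = F i (g⁻¹ * x) := rfl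

theorem leftTranslate_mul (g h : G) (F : ι → G → k) :
    leftTranslate k ι (g * h) F = leftTranslate k ι g (leftTranslate k ι h F) := by
  ext i x; simp [mul_assoc]

variable [AddCommGroup V] [Module k V] [DistribMulAction G V]

section Finite

variable [Fintype G] [Fintype ι]

variable (G) in
/-- The `kG`-linear map `(kG)^ι → V` sending the generator `e i` to `w i`. -/
def freeLift (w : ι → V) : (ι → G → k) →ₗ[k] V where
  toFun F := ∑ i, ∑ x, F i x • x • w i
  map_add' F F' := by simp only [Pi.add_apply, add_smul, Finset.sum_add_distrib]
  map_smul' c F := by simp [Finset.smul_sum, mul_smul]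

variable [DecidableEq G]

variable (k ι) in
/-- `c ↦ ∑ i, c i • e i`, where the `e i` are the free generators of `(kG)^ι`. -/
def genComb : (ι → k) →ₗ[k] (ι → G → k) :=
  LinearMap.compLeft (LinearMap.single k (fun _ : G => k) 1) ι

theorem freeLift_genComb (w : ι → V) (c : ι → k) :
    freeLift G w (genComb k ι c) = Fintype.linearCombination k w c := by
  simp [freeLift, genComb, Fintype.linearCombination_apply, Pi.single_apply]

end Finite

variable [SMulCommClass G k V]

variable (G) in
/-- The coinduced map `v ↦ (i, x) ↦ φ (x⁻¹ • v) i` into `(kG)^ι ≅ Hom_k(kG, k^ι)`. -/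
def coind (φ : V →ₗ[k] ι → k) : V →ₗ[k] (ι → G → k) where
  toFun v i x := φ (x⁻¹ • v) i
  map_add' u v := by ext; simp
  map_smul' c v := by ext; simp [smul_comm _ c]

theorem coind_smul (φ : V →ₗ[k] ι → k) (g : G) (v : V) :
    coind G φ (g • v) = leftTranslate k ι g (coind G φ v) := by
  ext i x; simp [coind, mul_smul]

def equivariantSubgroup (f : V →ₗ[k] (ι → G → k)) : Subgroup G where
  carrier := {h | ∀ v, f (h • v) = leftTranslate k ι h (f v)}
  one_mem' v := by ext; simp
  mul_mem' {a b} ha hb v := by rw [mul_smul, ha, hb, leftTranslate_mul]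
  inv_mem' {a} ha v := by
    conv_rhs => rw [← smul_inv_smul a v, ha (a⁻¹ • v), ← leftTranslate_mul, inv_mul_cancel]
    ext; simp

variable [Fintype G] [Fintype ι]

theorem freeLift_leftTranslate (w : ι → V) (g : G) (F : ι → G → k) :
    freeLift G w (leftTranslate k ι g F) = g • freeLift G w F := by
  simp only [freeLift, LinearMap.coe_mk, AddHom.coe_mk, leftTranslate_apply, Finset.smul_sum]
  refine Finset.sum_congr rfl fun i _ => Fintype.sum_equiv (Equiv.mulLeft g⁻¹) _ _ fun x => ?_
  simp [smul_comm g, ← mul_smul]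

theorem freeLift_eq_sum_smul (w : ι → V) (F : ι → G → k) :
    freeLift G w F = ∑ x, x • Fintype.linearCombination k w (fun i => F i x) := by
  simp only [freeLift, LinearMap.coe_mk, AddHom.coe_mk, Fintype.linearCombination_apply,
    Finset.smul_sum, smul_comm _ (F _ _)]
  exact Finset.sum_comm

end FreeModule

section Shear

variable {k G ι V : Type*} [Field k] [Group G] [AddCommGroup V] [Module k V]
  (B : Module.Basis (ι ⊕ ι) k V)

def aCoords : V →ₗ[k] ι → k := LinearMap.pi fun i => B.coord (Sum.inl i)

def bCoords : V →ₗ[k] ι → k := LinearMap.pi fun i => B.coord (Sum.inr i)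

@[simp]
theorem aCoords_basis_inl [DecidableEq ι] (m : ι) : aCoords B (B (Sum.inl m)) = Pi.single m 1 := by
  ext i; simp [aCoords, Finsupp.single_apply, Pi.single_apply, eq_comm]

@[simp]
theorem aCoords_basis_inr (j : ι) : aCoords B (B (Sum.inr j)) = 0 := by
  ext i; simp [aCoords]

variable [Fintype ι]

def aComb : (ι → k) →ₗ[k] V := Fintype.linearCombination k fun i => B (Sum.inl i)

def bComb : (ι → k) →ₗ[k] V := Fintype.linearCombination k fun i => B (Sum.inr i)

@[simp]
theorem aCoords_aComb [DecidableEq ι] (c : ι → k) : aCoords B (aComb B c) = c := by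
  ext i; simp [aCoords, aComb, Fintype.linearCombination_apply, Finsupp.single_apply]

@[simp]
theorem bCoords_aComb (c : ι → k) : bCoords B (aComb B c) = 0 := by
  ext i; simp [bCoords, aComb, Fintype.linearCombination_apply]

@[simp]
theorem aCoords_bComb (c : ι → k) : aCoords B (bComb B c) = 0 := by
  ext i; simp [aCoords, bComb, Fintype.linearCombination_apply]

@[simp]
theorem bCoords_bComb [DecidableEq ι] (c : ι → k) : bCoords B (bComb B c) = c := by
  ext i; simp [bCoords, bComb, Fintype.linearCombination_apply, Finsupp.single_apply]

theorem aComb_aCoords_add_bComb_bCoords (v : V) :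
    aComb B (aCoords B v) + bComb B (bCoords B v) = v := by
  conv_rhs => rw [← B.sum_repr v, Fintype.sum_sum_type]
  simp [aComb, bComb, aCoords, bCoords, Fintype.linearCombination_apply]

theorem eq_zero_of_aCoords_of_bCoords {v : V} (ha : aCoords B v = 0) (hb : bCoords B v = 0) :
    v = 0 := by
  rw [← aComb_aCoords_add_bComb_bCoords B v, ha, hb, map_zero, map_zero, add_zero]

variable [DistribMulAction G V]

/-- `g` fixes every `b j` and sends `a m` to `a m + ∑ j, M j m • b j`. -/
def ShearsBy (g : G) (M : Matrix ι ι k) : Prop :=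
  ∀ v, g • v = v + bComb B (M *ᵥ aCoords B v)

variable {B}

theorem ShearsBy.of_basis [SMulCommClass G k V] {g : G} {M : Matrix ι ι k}
    (ha : ∀ m, g • B (Sum.inl m) = B (Sum.inl m) + ∑ j, M j m • B (Sum.inr j))
    (hb : ∀ j, g • B (Sum.inr j) = B (Sum.inr j)) : ShearsBy B g M := by
  classical
  suffices DistribSMul.toLinearMap k V g =
      LinearMap.id + bComb B ∘ₗ M.mulVecLin ∘ₗ aCoords B from fun v => LinearMap.congr_fun this v
  refine B.ext fun j => ?_
  rcases j with m | j
  · simp [ha, bComb, Fintype.linearCombination_apply]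
  · simp [hb]

variable {g h : G} {M N : Matrix ι ι k}

theorem ShearsBy.aCoords_smul (hg : ShearsBy B g M) (v : V) : aCoords B (g • v) = aCoords B v := by
  rw [hg v, map_add, aCoords_bComb, add_zero]

theorem ShearsBy.bCoords_smul [DecidableEq ι] (hg : ShearsBy B g M) (v : V) :
    bCoords B (g • v) = bCoords B v + M *ᵥ aCoords B v := by
  rw [hg v, map_add, bCoords_bComb]

theorem ShearsBy.smul_aComb [DecidableEq ι] (hg : ShearsBy B g M) (c : ι → k) :
    g • aComb B c = aComb B c + bComb B (M *ᵥ c) := by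
  rw [hg, aCoords_aComb]

theorem ShearsBy.smul_bComb (hg : ShearsBy B g M) (c : ι → k) : g • bComb B c = bComb B c := by
  rw [hg, aCoords_bComb, mulVec_zero, map_zero, add_zero]

theorem ShearsBy.mul (hg : ShearsBy B g M) (hh : ShearsBy B h N) : ShearsBy B (g * h) (M + N) := by
  intro v
  rw [mul_smul, hh v, smul_add, hg.smul_bComb, hg v, add_mulVec, map_add, add_assoc]

section Splitting

variable [DecidableEq G]

variable (B) in
/-- For `N = M⁻¹`: `a m ↦ e m` and `b j ↦ ∑ i, N i j • (g - 1) • e i`. -/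
def splitting (g : G) (N : Matrix ι ι k) : V →ₗ[k] (ι → G → k) :=
  genComb k ι ∘ₗ aCoords B +
    (leftTranslate k ι g - LinearMap.id) ∘ₗ genComb k ι ∘ₗ N.mulVecLin ∘ₗ bCoords B

theorem ShearsBy.freeLift_splitting [Fintype G] [SMulCommClass G k V] [DecidableEq ι]
    (hg : ShearsBy B g M) (hMN : M * N = 1) (v : V) :
    freeLift G (fun i => B (Sum.inl i)) (splitting B g N v) = v := by
  simp only [splitting, LinearMap.add_apply, LinearMap.comp_apply, LinearMap.sub_apply, map_add,
    map_sub, LinearMap.id_apply, freeLift_leftTranslate, freeLift_genComb]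
  change aComb B _ + (g • aComb B _ - aComb B _) = v
  rw [hg.smul_aComb, add_sub_cancel_left, mulVecLin_apply, mulVec_mulVec, hMN, one_mulVec,
    aComb_aCoords_add_bComb_bCoords]

theorem ShearsBy.splitting_smul [CharP k 2] [DecidableEq ι] (hg : ShearsBy B g M)
    (hgg : g * g = 1) (hNM : N * M = 1) (v : V) :
    splitting B g N (g • v) = leftTranslate k ι g (splitting B g N v) := by
  have hTT : ∀ F, leftTranslate k ι g (leftTranslate k ι g F) = F := fun F => by
    rw [← leftTranslate_mul, hgg]; ext; simp
  simp only [splitting, LinearMap.add_apply, LinearMap.comp_apply, LinearMap.sub_apply,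
    LinearMap.id_apply, mulVecLin_apply, hg.aCoords_smul, hg.bCoords_smul, mulVec_mulVec, hNM,
    one_mulVec, map_add, map_sub, hTT]
  linear_combination (norm := module) CharTwo.two_eq_zero (R := k) •
    (leftTranslate k ι g (genComb k ι (N *ᵥ bCoords B v)) - genComb k ι (N *ᵥ bCoords B v))

theorem ShearsBy.exists_splitting [CharP k 2] [Fintype G] [SMulCommClass G k V] [DecidableEq ι]
    (hg : ShearsBy B g M) (hgg : g * g = 1) (hM : IsUnit M) :
    ∃ s : V →ₗ[k] (ι → G → k), (∀ v, freeLift G (fun i => B (Sum.inl i)) (s v) = v) ∧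
      ∀ h ∈ Subgroup.zpowers g, ∀ v, s (h • v) = leftTranslate k ι h (s v) := by
  obtain ⟨N, hNM, hMN⟩ : ∃ N : Matrix ι ι k, N * M = 1 ∧ M * N = 1 :=
    ⟨↑hM.unit⁻¹, hM.unit.inv_mul, hM.unit.mul_inv⟩
  refine ⟨splitting B g N, hg.freeLift_splitting hMN, fun h hh => ?_⟩
  exact (Subgroup.zpowers_le (H := equivariantSubgroup _)).mpr (hg.splitting_smul hgg hNM) hh

end Splitting

theorem ShearsBy.coind_bCoords_injective [DecidableEq ι] [SMulCommClass G k V]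
    (hg : ShearsBy B g M) (hM : IsUnit M) : Function.Injective (coind G (bCoords B)) := by
  rw [injective_iff_map_eq_zero]
  intro v hv
  have hb : bCoords B v = 0 := by
    ext i; simpa [coind] using congr_fun (congr_fun hv i) 1
  have ha : M *ᵥ aCoords B v = 0 := by
    ext i; simpa [coind, hg.bCoords_smul, hb] using congr_fun (congr_fun hv i) g⁻¹
  refine eq_zero_of_aCoords_of_bCoords B ?_ hb
  exact (mulVec_injective_iff_isUnit.mpr hM) (ha.trans (mulVec_zero M).symm)

theorem freeLift_coind_eq_sum [Fintype G] [SMulCommClass G k V] (φ : V →ₗ[k] ι → k) (v : V) :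
    freeLift G (fun i => B (Sum.inl i)) (coind G φ v) = ∑ x : G, x • aComb B (φ (x⁻¹ • v)) :=
  freeLift_eq_sum_smul _ _

end Shear

section KleinFour

variable {k ι V : Type*} [Field k] [CharP k 2] [Fintype ι] [DecidableEq ι]
  [AddCommGroup V] [Module k V] [DistribMulAction K4 V] [SMulCommClass K4 k V]
  {B : Module.Basis (ι ⊕ ι) k V}

theorem freeLift_coind_bCoords_eq_zero {P Q : Matrix ι ι k} (hσ : ShearsBy B sg P)
    (hτ : ShearsBy B tg Q) (hPQ : Commute P Q) (v : V) :
    freeLift K4 (fun i => B (Sum.inl i)) (coind K4 (bCoords B) v) = 0 := by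
  have key : ∀ {x : K4} {D}, ShearsBy B x D → x • aComb B (bCoords B (x⁻¹ • v)) =
      aComb B (bCoords B v + D *ᵥ aCoords B v) +
        bComb B (D *ᵥ bCoords B v + (D * D) *ᵥ aCoords B v) := fun hx => by
    rw [K4.inv_eq_self, hx.bCoords_smul, hx.smul_aComb, mulVec_add, mulVec_mulVec]
  have h1 : ShearsBy B (1 : K4) 0 := fun v => by simp
  rw [freeLift_coind_eq_sum, K4.sum_eq, key h1, key hσ, key hτ, key (hσ.mul hτ)]
  -- with `D` running over `0, P, Q, P + Q`, both coordinates come out as `2 • _`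
  apply eq_zero_of_aCoords_of_bCoords B
  · simp only [map_add, aCoords_aComb, aCoords_bComb, add_mulVec, zero_mulVec]
    linear_combination (norm := module) CharTwo.two_eq_zero (R := k) •
      ((2 : k) • bCoords B v + P *ᵥ aCoords B v + Q *ᵥ aCoords B v)
  · simp only [map_add, bCoords_aComb, bCoords_bComb, add_mulVec, zero_mulVec, mul_add, add_mul,
      hPQ.eq, zero_mul]
    linear_combination (norm := module) CharTwo.two_eq_zero (R := k) •
      (P *ᵥ bCoords B v + Q *ᵥ bCoords B v + (P * P) *ᵥ aCoords B v + (Q * Q) *ᵥ aCoords B v +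
        (Q * P) *ᵥ aCoords B v)

end KleinFour

section Theta

variable {k : Type*} [Field k]

theorem eq_X_sub_C_pow_of_isRoot {θ : k[X]} {n : ℕ} (hmonic : θ.Monic) (hdeg : θ.natDegree = n)
    (hpow : ∃ (p : k[X]) (e : ℕ), Irreducible p ∧ θ = p ^ e) {r : k} (hr : θ.IsRoot r) :
    θ = (X - C r) ^ n := by
  obtain ⟨p, e, hp, rfl⟩ := hpow
  have hassoc : Associated (X - C r) p := (irreducible_X_sub_C r).associated_of_dvd hp
    ((prime_X_sub_C r).dvd_of_dvd_pow (dvd_iff_isRoot.mpr hr))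
  have heq : (X - C r) ^ e = p ^ e :=
    eq_of_monic_of_associated ((monic_X_sub_C r).pow e) hmonic (hassoc.pow_pow)
  rw [← heq, natDegree_pow, natDegree_X_sub_C, mul_one] at hdeg
  rw [← heq, hdeg]

theorem Polynomial.Monic.eval_eq_pow_add_sum {θ : k[X]} {n : ℕ} (hmonic : θ.Monic)
    (hdeg : θ.natDegree = n) (t : k) :
    θ.eval t = t ^ n + ∑ j : Fin n, θ.coeff (n - 1 - j) * t ^ (n - 1 - j) := by
  rw [eval_eq_sum_range, hdeg, Finset.sum_range_succ, ← hdeg, hmonic.coeff_natDegree, hdeg,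
    one_mul, add_comm, Fin.sum_univ_eq_sum_range (fun j => θ.coeff (n - 1 - j) * t ^ (n - 1 - j)),
    Finset.sum_range_reflect (fun j => θ.coeff j * t ^ j)]

/-- The matrix of `X = σ - 1`, from the `a`'s to the `b`'s, on `V_{2n,θ}`. -/
def thetaMatrix (θ : k[X]) (n : ℕ) : Matrix (Fin n) (Fin n) k :=
  fun j m => if (m : ℕ) = 0 then θ.coeff (n - 1 - j) else if (j : ℕ) + 1 = m then 1 else 0

theorem vecMul_thetaMatrix_zero (θ : k[X]) {m : ℕ} (v : Fin (m + 1) → k) :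
    (v ᵥ* thetaMatrix θ (m + 1)) 0 = ∑ j, v j * θ.coeff (m - j) := by
  simp [vecMul, dotProduct, thetaMatrix]

theorem vecMul_thetaMatrix_succ (θ : k[X]) {m : ℕ} (v : Fin (m + 1) → k) (i : Fin m) :
    (v ᵥ* thetaMatrix θ (m + 1)) i.succ = v i.castSucc := by
  have h : ∀ j : Fin (m + 1), ((j : ℕ) = i ↔ j = i.castSucc) := fun j => by simp [Fin.ext_iff]
  simp [vecMul, dotProduct, thetaMatrix, h]

theorem isUnit_thetaMatrix_add_smul_one [CharP k 2] {θ : k[X]} {n : ℕ} (hmonic : θ.Monic)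
    (hdeg : θ.natDegree = n) {t : k} (ht : θ.eval t ≠ 0) : IsUnit (thetaMatrix θ n + t • 1) := by
  rw [isUnit_iff_isUnit_det, isUnit_iff_ne_zero, Ne, ← exists_vecMul_eq_zero_iff]
  rintro ⟨v, hv0, hv⟩
  obtain ⟨m, rfl⟩ : ∃ m, n = m + 1 := by
    rcases n with _ | m
    · exact absurd (Subsingleton.elim v 0) hv0
    · exact ⟨m, rfl⟩
  have hcol : ∀ j, (v ᵥ* thetaMatrix θ (m + 1)) j + t * v j = 0 := fun j => by
    simpa [vecMul_add, vecMul_smul, mul_comm] using congr_fun hv j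
  -- a left null vector is a geometric progression with ratio `t`, ending in `v (Fin.last m)`
  have hgeom : ∀ j : Fin (m + 1), v j = t ^ (m - j) * v (Fin.last m) := by
    refine Fin.reverseInduction (by simp) fun i hi => ?_
    have h := hcol i.succ
    rw [vecMul_thetaMatrix_succ, CharTwo.add_eq_zero, hi] at h
    rw [h, Fin.val_castSucc, Fin.val_succ, ← mul_assoc, ← pow_succ',
      show m - (i + 1) + 1 = m - i by omega]
  have hlast : θ.eval t * v (Fin.last m) = 0 := by
    rw [hmonic.eval_eq_pow_add_sum hdeg, add_tsub_cancel_right, add_mul, Finset.sum_mul, add_comm,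
      ← hcol 0, vecMul_thetaMatrix_zero, hgeom 0]
    congr 1
    · exact Finset.sum_congr rfl fun j _ => by rw [hgeom j]; ring
    · simp [pow_succ', mul_assoc]
  refine hv0 (funext fun j => ?_)
  rw [hgeom, (mul_eq_zero.mp hlast).resolve_left ht, mul_zero, Pi.zero_apply]

end Theta

section Vtheta

variable {k : Type} [Field k] {n : ℕ} {hn : 0 < n} {θ : k[X]} {V : Type} [AddCommGroup V]
  [Module k V] [DistribMulAction K4 V] [SMulCommClass K4 k V]
  {B : Module.Basis (Fin n ⊕ Fin n) k V}

theorem IsVtheta.shearsBy_sg (hV : IsVtheta k n hn θ V B) : ShearsBy B sg (thetaMatrix θ n) := by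
  refine ShearsBy.of_basis (fun m => ?_) hV.2.2.2.1
  by_cases hm : (m : ℕ) = 0
  · obtain rfl : m = ⟨0, hn⟩ := Fin.ext hm
    simp [hV.2.2.1, thetaMatrix]
  · have hpred : ∀ j : Fin n, (j : ℕ) + 1 = m ↔ j = ⟨m - 1, by omega⟩ := fun j => by
      simp [Fin.ext_iff]; omega
    simp [hV.2.1 m ⟨m - 1, by omega⟩ (by simp; omega), thetaMatrix, hm, hpred]

theorem IsVtheta.shearsBy_tg (hV : IsVtheta k n hn θ V B) : ShearsBy B tg 1 :=
  ShearsBy.of_basis (fun m => by simp [hV.1 m, one_apply]) hV.2.2.2.2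

end Vtheta

end

/-- Let `θ` be a monic polynomial of degree `n ≥ 1` which is a power of an irreducible
polynomial and is neither `xⁿ` nor `(x+1)ⁿ`. Then there is a surjective `kG`-homomorphism
`π : (kG)ⁿ → V_{2n,θ}` which splits on restriction to each of `H₁, H₂, H₃` and whose
kernel is isomorphic as a `kG`-module to `V_{2n,θ}` itself (realized via an injective
equivariant map `ι : V → (kG)ⁿ` with range `ker π`). The free module `(kG)ⁿ` is realized
as `Fin n → (K4 → k)` with the left regular action `(g • F) i x = F i (g⁻¹x)`. -/
theorem stmt10 (k : Type) [Field k] [CharP k 2] (n : ℕ) (hn : 0 < n)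
    (θ : Polynomial k) (hmonic : θ.Monic) (hdeg : θ.natDegree = n)
    (hpow : ∃ (p : Polynomial k) (e : ℕ), Irreducible p ∧ θ = p ^ e)
    (hne1 : θ ≠ Polynomial.X ^ n) (hne2 : θ ≠ (Polynomial.X + 1) ^ n)
    (V : Type) [AddCommGroup V] [Module k V] [DistribMulAction K4 V] [SMulCommClass K4 k V]
    (B : Module.Basis (Fin n ⊕ Fin n) k V) (hV : IsVtheta k n hn θ V B) :
    ∃ π : (Fin n → K4 → k) →ₗ[k] V,
      Function.Surjective π ∧
      (∀ (g : K4) (F : Fin n → K4 → k),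
        π (fun i x => F i (g⁻¹ * x)) = g • π F) ∧
      (∀ H ∈ ({H1, H2, H3} : Set (Subgroup K4)),
        ∃ s : V →ₗ[k] (Fin n → K4 → k),
          (∀ v : V, π (s v) = v) ∧
          (∀ h ∈ H, ∀ v : V, s (h • v) = fun i x => s v i (h⁻¹ * x))) ∧
      ∃ ι : V →ₗ[k] (Fin n → K4 → k),
        Function.Injective ι ∧
        (∀ (g : K4) (v : V), ι (g • v) = fun i x => ι v i (g⁻¹ * x)) ∧
        LinearMap.range ι = LinearMap.ker π := by
  have hσ := hV.shearsBy_sg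
  have hτ := hV.shearsBy_tg
  have hroot : ∀ r : k, θ ≠ (X - C r) ^ n → θ.eval r ≠ 0 := fun r hr h =>
    hr (eq_X_sub_C_pow_of_isRoot hmonic hdeg hpow h)
  have hP : IsUnit (thetaMatrix θ n) := by
    simpa using isUnit_thetaMatrix_add_smul_one hmonic hdeg (hroot 0 (by simpa using hne1))
  have hP1 : IsUnit (thetaMatrix θ n + 1) := by
    simpa using isUnit_thetaMatrix_add_smul_one hmonic hdeg
      (hroot 1 (by rwa [map_one, CharTwo.sub_eq_add]))
  have hsplit : ∀ H ∈ ({H1, H2, H3} : Set (Subgroup K4)), ∃ s : V →ₗ[k] (Fin n → K4 → k),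
      (∀ v, freeLift K4 (fun i => B (Sum.inl i)) (s v) = v) ∧
        ∀ h ∈ H, ∀ v, s (h • v) = leftTranslate k (Fin n) h (s v) := by
    rintro H (rfl | rfl | rfl)
    · exact hσ.exists_splitting (K4.mul_self _) hP
    · exact hτ.exists_splitting (K4.mul_self _) isUnit_one
    · exact (hσ.mul hτ).exists_splitting (K4.mul_self _) hP1
  obtain ⟨s, hs, -⟩ := hsplit H2 (by simp)
  have hinj := hτ.coind_bCoords_injective (G := K4) isUnit_one
  refine ⟨_, Function.LeftInverse.surjective hs, freeLift_leftTranslate _, hsplit, _, hinj,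
    coind_smul _, LinearMap.range_eq_ker_of_finrank_eq hinj (Function.LeftInverse.surjective hs)
      (freeLift_coind_bCoords_eq_zero hσ hτ (Commute.one_right _)) ?_⟩
  simp [Module.finrank_eq_card_basis B, Module.finrank_pi_fintype]
  ring
end

section
/- Let n ≥ 1. For i ∈ {1,3}, the restriction of V_{2n,∞} to Hᵢ is a free kHᵢ-module of rank n, while the restriction of V_{2n,∞} to H₂ is isomorphic, as a kH₂-module, to the direct sum of two copies of the trivial module k and n−1 copies of the regular module kH₂. -/
/-- `V` carries the structure of the module `V_{2n,∞}`: the basis vector `B (Sum.inl i)`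
is `a_{i+1}` and `B (Sum.inr i)` is `b_{i+1}` (for `0 ≤ i ≤ n-1`), with `X·aᵢ = bᵢ` for
all `i`, `Y·aᵢ = b_{i+1}` for `i ≤ n-1`, `Y·aₙ = 0`, and `X·bⱼ = Y·bⱼ = 0`, i.e.
(with `σ = 1 + X`, `τ = 1 + Y`) `σ·aᵢ = aᵢ + bᵢ`, `τ·aᵢ = aᵢ + b_{i+1}` (reading
`b_{n+1} = 0`), and `σ, τ` fix the `bⱼ`. -/
def IsVinf (k : Type) [Field k] (n : ℕ) (V : Type) [AddCommGroup V] [Module k V]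
    [DistribMulAction K4 V] (B : Module.Basis (Fin n ⊕ Fin n) k V) : Prop :=
  (∀ i : Fin n, sg • B (Sum.inl i) = B (Sum.inl i) + B (Sum.inr i)) ∧
  (∀ i : Fin n, tg • B (Sum.inl i) = B (Sum.inl i) +
      (if h : (i : ℕ) + 1 < n then B (Sum.inr ⟨(i : ℕ) + 1, h⟩) else 0)) ∧
  (∀ j : Fin n, sg • B (Sum.inr j) = B (Sum.inr j)) ∧
  (∀ j : Fin n, tg • B (Sum.inr j) = B (Sum.inr j))

/-
For `H = ⟨g⟩` of order two and `k` of characteristic two, `kH` has the basis `δ₁, 1`, and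
`g • δ₁ = δ_g = δ₁ + 1`. Hence a module with a basis `aᵢ, bᵢ` such that `g aᵢ = aᵢ + bᵢ`
and `g bᵢ = bᵢ` is free over `kH`: send `aᵢ ↦ δ₁` and `bᵢ ↦ 1` in the `i`-th copy; basis
vectors fixed by `g` span trivial summands. For `σ` the defining basis of `V_{2n,∞}` already
has this shape. For `τ` the pairs are `(aᵢ, b_{i+1})`, while `aₙ` and `b₁` are fixed. For `στ`
one replaces `bᵢ` by `(στ - 1) aᵢ = bᵢ + b_{i+1}`, a unitriangular change of basis.
-/
open Module Sum Subgroup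

theorem Module.Basis.equiv_intertwines {R M M' ι ι' : Type*} [Semiring R]
    [AddCommMonoid M] [Module R M] [AddCommMonoid M'] [Module R M']
    (b : Basis ι R M) (b' : Basis ι' R M') (e : ι ≃ ι')
    {f : M →ₗ[R] M} {f' : M' →ₗ[R] M'}
    (h : ∀ i, b.equiv b' e (f (b i)) = f' (b' (e i))) (x : M) :
    b.equiv b' e (f x) = f' (b.equiv b' e x) := by
  have : (b.equiv b' e).toLinearMap ∘ₗ f = f' ∘ₗ (b.equiv b' e).toLinearMap :=
    b.ext fun i => by simpa using h i
  exact LinearMap.congr_fun this x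

section RegularModule

variable (k : Type*) [Field k] {H : Type*} [Group H] [DecidableEq H]

def regularAction (ι : Type*) (h : H) : (ι → H → k) →ₗ[k] (ι → H → k) where
  toFun f i x := f i (h⁻¹ * x)
  map_add' _ _ := rfl
  map_smul' _ _ := rfl

variable {k} {s : H}

theorem linearIndependent_const_single_one (hs : s ≠ 1) :
    LinearIndependent k fun b : Bool => bif b then (1 : H → k) else Pi.single 1 1 := by
  refine Fintype.linearIndependent_iff.2 fun c hc => ?_
  have hc_s : c true = 0 := by simpa [hs] using congrFun hc s
  have hc_one : c true + c false = 0 := by simpa using congrFun hc 1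
  rintro (_ | _)
  · simpa [hc_s] using hc_one
  · exact hc_s

theorem span_const_single_one_eq_top (hH : ∀ x : H, x = 1 ∨ x = s) :
    ⊤ ≤ Submodule.span k
      (Set.range fun b : Bool => bif b then (1 : H → k) else Pi.single 1 1) := by
  rintro f -
  refine (Submodule.mem_span_range_iff_exists_fun k).2
    ⟨fun b => bif b then f s else f 1 - f s, ?_⟩
  funext x
  rcases hH x with rfl | rfl
  · simp
  · by_cases hx : x = 1 <;> simp [hx]

variable (k) (hs : s ≠ 1) (hH : ∀ x : H, x = 1 ∨ x = s)

noncomputable def regularBasis : Basis Bool k (H → k) :=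
  .mk (linearIndependent_const_single_one hs) (span_const_single_one_eq_top hH)

noncomputable def piRegularBasis (ι : Type*) [Fintype ι] [DecidableEq ι] :
    Basis (ι ⊕ ι) k (ι → H → k) :=
  (Pi.basis fun _ : ι => regularBasis k hs hH).reindex <|
    (Equiv.sigmaEquivProd ι Bool).trans <|
      (Equiv.prodComm ι Bool).trans (Equiv.boolProdEquivSum ι)

variable {ι : Type*} [Fintype ι] [DecidableEq ι]

theorem piRegularBasis_inl (i : ι) :
    piRegularBasis k hs hH ι (inl i) = Pi.single i (Pi.single 1 1) := by
  simp [piRegularBasis, regularBasis]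

theorem piRegularBasis_inr (i : ι) : piRegularBasis k hs hH ι (inr i) = Pi.single i 1 := by
  simp [piRegularBasis, regularBasis]

theorem regularAction_piRegularBasis_inr (i : ι) :
    regularAction k ι s (piRegularBasis k hs hH ι (inr i)) =
      piRegularBasis k hs hH ι (inr i) := by
  rw [piRegularBasis_inr]
  funext j x
  by_cases hj : j = i <;> simp [regularAction, hj]

variable [CharP k 2]

theorem regularAction_piRegularBasis_inl (i : ι) :
    regularAction k ι s (piRegularBasis k hs hH ι (inl i)) =
      piRegularBasis k hs hH ι (inl i) + piRegularBasis k hs hH ι (inr i) := by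
  rw [piRegularBasis_inl, piRegularBasis_inr]
  funext j x
  rcases hH x with rfl | rfl <;> by_cases hj : j = i <;>
    simp [regularAction, hj, hs, CharTwo.add_self_eq_zero]

end RegularModule

theorem Subgroup.eq_one_or_eq_of_orderOf_eq_two {G : Type*} [Group G] {g : G}
    (hg : orderOf g = 2) (x : zpowers g) : x = 1 ∨ x = ⟨g, mem_zpowers g⟩ := by
  obtain ⟨x, hx⟩ := x
  obtain ⟨j, rfl⟩ := mem_zpowers_iff.1 hx
  simp only [Subtype.ext_iff, OneMemClass.coe_one]
  rw [← zpow_mod_orderOf, hg]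
  rcases Int.emod_two_eq_zero_or_one j with h | h <;> simp [h]

section Restriction

variable {k G W : Type*} [Field k] [CharP k 2] [Group G] [AddCommGroup W] [Module k W]
  [DistribMulAction G W] [SMulCommClass G k W] {g : G}

theorem exists_equiv_pi_regular_of_basis {ι : Type*} [Fintype ι] [DecidableEq ι]
    (hg : orderOf g = 2) (C : Basis (ι ⊕ ι) k W)
    (hC_inl : ∀ i, g • C (inl i) = C (inl i) + C (inr i))
    (hC_inr : ∀ i, g • C (inr i) = C (inr i)) :
    ∃ e : W ≃ₗ[k] (ι → zpowers g → k),
      ∀ (h : zpowers g) (v : W), e ((h : G) • v) = fun i x => e v i (h⁻¹ * x) := by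
  classical
  have hs : (⟨g, mem_zpowers g⟩ : zpowers g) ≠ 1 := by
    simp [← orderOf_eq_one_iff, hg]
  have hH := eq_one_or_eq_of_orderOf_eq_two hg
  refine ⟨C.equiv (piRegularBasis k hs hH ι) (.refl _), fun h v => ?_⟩
  rcases hH h with rfl | rfl
  · simp
  · refine C.equiv_intertwines _ _ (f := DistribSMul.toLinearMap k W g)
      (f' := regularAction k ι _) ?_ v
    rintro (i | i)
    · simp [hC_inl, regularAction_piRegularBasis_inl]
    · simp [hC_inr, regularAction_piRegularBasis_inr]

theorem exists_equiv_prod_pi_regular_of_basis {m : ℕ} (hg : orderOf g = 2)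
    (C : Basis (Fin (m + 1) ⊕ Fin (m + 1)) k W)
    (hC_castSucc : ∀ i : Fin m, g • C (inl i.castSucc) = C (inl i.castSucc) + C (inr i.succ))
    (hC_last : g • C (inl (Fin.last m)) = C (inl (Fin.last m)))
    (hC_inr : ∀ j, g • C (inr j) = C (inr j)) :
    ∃ e : W ≃ₗ[k] (k × k × (Fin m → zpowers g → k)),
      ∀ (h : zpowers g) (v : W),
        e ((h : G) • v) = ((e v).1, (e v).2.1, fun i x => (e v).2.2 i (h⁻¹ * x)) := by
  classical
  have hs : (⟨g, mem_zpowers g⟩ : zpowers g) ≠ 1 := by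
    simp [← orderOf_eq_one_iff, hg]
  have hH := eq_one_or_eq_of_orderOf_eq_two hg
  let D := (Basis.singleton Unit k).prod <|
    (Basis.singleton Unit k).prod (piRegularBasis k hs hH (Fin m))
  -- `a_{m+1}` and `b_1` span trivial summands; `a_i` pairs with `b_{i+1}` for `i ≤ m`.
  let E : Fin (m + 1) ⊕ Fin (m + 1) ≃ Unit ⊕ Unit ⊕ (Fin m ⊕ Fin m) :=
    ((((finSuccEquivLast.trans (Equiv.optionEquivSumPUnit _)).sumCongr
      ((finSuccEquiv m).trans (Equiv.optionEquivSumPUnit _))).trans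
      (Equiv.sumSumSumComm _ _ _ _)).trans (Equiv.sumComm _ _)).trans (Equiv.sumAssoc _ _ _)
  refine ⟨C.equiv D E, fun h v => ?_⟩
  rcases hH h with rfl | rfl
  · simp
  · refine C.equiv_intertwines _ _ (f := DistribSMul.toLinearMap k W g)
      (f' := LinearMap.id.prodMap (LinearMap.id.prodMap (regularAction k (Fin m) _))) ?_ v
    rintro (i | i)
    · induction i using Fin.lastCases with
      | last => simp [hC_last, D, E, Prod.mk_zero_zero]
      | cast i => simp [hC_castSucc, D, E, regularAction_piRegularBasis_inl]
    · induction i using Fin.cases with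
      | zero => simp [hC_inr, D, E]
      | succ i => simp [hC_inr, D, E, regularAction_piRegularBasis_inr]

end Restriction

namespace IsVinf

variable {k : Type} [Field k] {m : ℕ} {V : Type} [AddCommGroup V] [Module k V]
  [DistribMulAction K4 V] {B : Basis (Fin (m + 1) ⊕ Fin (m + 1)) k V}

theorem tg_smul_inl_castSucc (hV : IsVinf k (m + 1) V B) (i : Fin m) :
    tg • B (inl i.castSucc) = B (inl i.castSucc) + B (inr i.succ) := by
  simp [hV.2.1, Fin.succ]

theorem tg_smul_inl_last (hV : IsVinf k (m + 1) V B) :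
    tg • B (inl (Fin.last m)) = B (inl (Fin.last m)) := by
  simp [hV.2.1]

theorem sg_mul_tg_smul_inl_castSucc (hV : IsVinf k (m + 1) V B) (i : Fin m) :
    (sg * tg) • B (inl i.castSucc) =
      B (inl i.castSucc) + (B (inr i.castSucc) + B (inr i.succ)) := by
  rw [mul_smul, hV.tg_smul_inl_castSucc, smul_add, hV.1, hV.2.2.1, add_assoc]

theorem sg_mul_tg_smul_inl_last (hV : IsVinf k (m + 1) V B) :
    (sg * tg) • B (inl (Fin.last m)) = B (inl (Fin.last m)) + B (inr (Fin.last m)) := by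
  rw [mul_smul, hV.tg_smul_inl_last, hV.1]

theorem exists_basis_sg_mul_tg (hV : IsVinf k (m + 1) V B) :
    ∃ C : Basis (Fin (m + 1) ⊕ Fin (m + 1)) k V,
      (∀ i, (sg * tg) • C (inl i) = C (inl i) + C (inr i)) ∧
      ∀ j, (sg * tg) • C (inr j) = C (inr j) := by
  have ⟨_, _, hσ_inr, hτ_inr⟩ := hV
  let D : Fin (m + 1) ⊕ Fin (m + 1) → V :=
    Sum.elim (B ∘ inl) fun j => (sg * tg) • B (inl j) - B (inl j)
  have hD_castSucc (i : Fin m) : D (inr i.castSucc) = B (inr i.castSucc) + B (inr i.succ) := by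
    simp [D, hV.sg_mul_tg_smul_inl_castSucc]
  have hD_last : D (inr (Fin.last m)) = B (inr (Fin.last m)) := by
    simp [D, hV.sg_mul_tg_smul_inl_last]
  have hB_inr_mem (j : Fin (m + 1)) : B (inr j) ∈ Submodule.span k (Set.range D) := by
    induction j using Fin.reverseInduction with
    | last => exact hD_last ▸ Submodule.subset_span ⟨_, rfl⟩
    | cast i ih =>
      have : B (inr i.castSucc) = D (inr i.castSucc) - B (inr i.succ) := by
        rw [hD_castSucc, add_sub_cancel_right]
      exact this ▸ sub_mem (Submodule.subset_span ⟨_, rfl⟩) ih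
  have hspan : ⊤ ≤ Submodule.span k (Set.range D) := by
    rw [← B.span_eq, Submodule.span_le]
    rintro _ ⟨i | j, rfl⟩
    · exact Submodule.subset_span ⟨inl i, rfl⟩
    · exact hB_inr_mem j
  let C := basisOfTopLeSpanOfCardEqFinrank D hspan (finrank_eq_card_basis B).symm
  have hC : ⇑C = D := coe_basisOfTopLeSpanOfCardEqFinrank _ _ _
  refine ⟨C, fun i => by simp [hC, D], fun j => ?_⟩
  rw [hC]
  induction j using Fin.lastCases with
  | last => rw [hD_last, mul_smul, hτ_inr, hσ_inr]
  | cast i => rw [hD_castSucc, mul_smul, smul_add, smul_add, hτ_inr, hτ_inr, hσ_inr, hσ_inr]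

end IsVinf

/-- Let `n ≥ 1`. For `i ∈ {1,3}`, the restriction of `V_{2n,∞}` to `Hᵢ` is a free
`kHᵢ`-module of rank `n`, while the restriction to `H₂` is isomorphic, as a `kH₂`-module,
to the direct sum of two copies of the trivial module `k` and `n-1` copies of the regular
module `kH₂` (the regular module `kH` is realized as `H → k` with the left regular action
`(h • f)(x) = f(h⁻¹x)`). -/
theorem stmt11 (k : Type) [Field k] [CharP k 2] (n : ℕ) (hn : 1 ≤ n)
    (V : Type) [AddCommGroup V] [Module k V] [DistribMulAction K4 V] [SMulCommClass K4 k V]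
    (B : Module.Basis (Fin n ⊕ Fin n) k V) (hV : IsVinf k n V B) :
    (∀ H ∈ ({H1, H3} : Set (Subgroup K4)),
      ∃ e : V ≃ₗ[k] (Fin n → (↥H → k)),
        ∀ (h : ↥H) (v : V), e ((h : K4) • v) = fun i x => e v i (h⁻¹ * x)) ∧
    (∃ e : V ≃ₗ[k] (k × k × (Fin (n - 1) → (↥H2 → k))),
      ∀ (h : ↥H2) (v : V),
        e ((h : K4) • v) = ((e v).1, (e v).2.1, fun i x => (e v).2.2 i (h⁻¹ * x))) := by
  obtain ⟨m, rfl⟩ : ∃ m, n = m + 1 := ⟨n - 1, by omega⟩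
  have ⟨hσ_inl, _, hσ_inr, hτ_inr⟩ := hV
  have hsq : ∀ g : K4, g ^ 2 = 1 := by decide
  refine ⟨?_, exists_equiv_prod_pi_regular_of_basis (orderOf_eq_prime (hsq tg) (by decide)) B
    hV.tg_smul_inl_castSucc hV.tg_smul_inl_last hτ_inr⟩
  rintro H (rfl | rfl)
  · exact exists_equiv_pi_regular_of_basis (orderOf_eq_prime (hsq sg) (by decide)) B
      hσ_inl hσ_inr
  · obtain ⟨C, hC_inl, hC_inr⟩ := hV.exists_basis_sg_mul_tg
    exact exists_equiv_pi_regular_of_basis (orderOf_eq_prime (hsq _) (by decide)) C hC_inl hC_inr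
end

section
/- For every n ≥ 0, the k-linear dual of V_{2n+1}, equipped with the contragredient G-action, is isomorphic as a kG-module to V_{−(2n+1)}. -/
/-! Since `σ⁻¹ = σ` and `τ⁻¹ = τ`, the contragredient action of a generator on the dual basis
is the transpose of its action on `V_{2n+1}`: where `σ` adds `bᵢ` to `aᵢ`, on the dual it adds
`aᵢ*` to `bᵢ*` and fixes every `aⱼ*`. So the dual basis has the shape of `V_{-(2n+1)}` with the
roles of the `a`'s and `b`'s exchanged, and reversing the indices, `aⱼ* ↦ b_{n-j}` and
`bᵢ* ↦ a_{n+1-i}`, matches the two generators exactly. As `σ` and `τ` generate `G`, nothing else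
needs checking. -/

open Module

section Shear

variable {k V : Type*} [CommRing k] [AddCommGroup V] [Module k V] {α β : Type*}

def Module.Basis.IsShear (B : Basis (β ⊕ α) k V) (f : α → β) (T : V → V) : Prop :=
  (∀ a, T (B (.inl (f a))) = B (.inl (f a)) + B (.inr a)) ∧
  (∀ b ∉ Set.range f, T (B (.inl b)) = B (.inl b)) ∧
  ∀ a, T (B (.inr a)) = B (.inr a)

variable [DecidableEq α] [DecidableEq β] [Finite α] [Finite β]
  {B : Basis (β ⊕ α) k V} {f : α → β} {T : V →ₗ[k] V}

theorem Module.Basis.IsShear.dualBasis_inl_comp (hT : B.IsShear f T) (b : β) :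
    B.dualBasis (.inl b) ∘ₗ T = B.dualBasis (.inl b) := by
  obtain ⟨hshear, hfix, hfix'⟩ := hT
  refine B.ext fun p => ?_
  rcases p with b' | a
  · by_cases hb' : b' ∈ Set.range f
    · obtain ⟨a, rfl⟩ := hb'
      simp [hshear]
    · simp [hfix b' hb']
  · simp [hfix']

theorem Module.Basis.IsShear.dualBasis_inr_comp (hT : B.IsShear f T) (hf : Function.Injective f)
    (a : α) :
    B.dualBasis (.inr a) ∘ₗ T = B.dualBasis (.inr a) + B.dualBasis (.inl (f a)) := by
  obtain ⟨hshear, hfix, hfix'⟩ := hT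
  refine B.ext fun p => ?_
  rcases p with b' | a'
  · by_cases hb' : b' ∈ Set.range f
    · obtain ⟨a', rfl⟩ := hb'
      simp [hshear, Finsupp.single_apply, hf.eq_iff, eq_comm]
    · have hne : f a ≠ b' := fun h => hb' ⟨a, h⟩
      simp [hfix b' hb', hne]
  · simp [hfix']

end Shear

section Contragredient

variable {G k V W : Type*} [Group G] [CommRing k]
  [AddCommGroup V] [Module k V] [DistribMulAction G V] [SMulCommClass G k V]
  [AddCommGroup W] [Module k W] [DistribMulAction G W] [SMulCommClass G k W]

variable (G) in
def contragredientIntertwiners (e : Dual k V ≃ₗ[k] W) : Submonoid G where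
  carrier := {g | ∀ f : Dual k V, e (f ∘ₗ DistribSMul.toLinearMap k V g⁻¹) = g • e f}
  one_mem' f := by
    rw [inv_one, one_smul]
    exact congrArg e (LinearMap.ext fun x => congrArg f (one_smul G x))
  mul_mem' {g h} hg hh f := by
    have hcomp : f ∘ₗ DistribSMul.toLinearMap k V (g * h)⁻¹ =
        (f ∘ₗ DistribSMul.toLinearMap k V h⁻¹) ∘ₗ DistribSMul.toLinearMap k V g⁻¹ :=
      LinearMap.ext fun x => congrArg f (by simp [mul_smul])
    rw [hcomp, hg, hh, mul_smul]

variable {α β α' β' : Type*} [DecidableEq α] [DecidableEq β] [Finite α] [Finite β]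

theorem mem_contragredientIntertwiners_of_isShear {B : Basis (β ⊕ α) k V}
    {B' : Basis (α' ⊕ β') k W} {f : α → β} {f' : α' → β'} {ψ : α → α'} {ψ' : β → β'}
    (hψ : ∀ a, ψ' (f a) = f' (ψ a)) (hf : Function.Injective f) {g : G}
    (hV : B.IsShear f (g⁻¹ • ·)) {e : Dual k V ≃ₗ[k] W}
    (he : ∀ b, e (B.dualBasis (.inl b)) = B' (.inr (ψ' b)))
    (he' : ∀ a, e (B.dualBasis (.inr a)) = B' (.inl (ψ a)))
    (hW : ∀ a, g • B' (.inl a) = B' (.inl a) + B' (.inr (f' a)))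
    (hW' : ∀ b, g • B' (.inr b) = B' (.inr b)) :
    g ∈ contragredientIntertwiners G e := by
  suffices e.toLinearMap ∘ₗ (DistribSMul.toLinearMap k V g⁻¹).dualMap =
      DistribSMul.toLinearMap k W g ∘ₗ e.toLinearMap from
    fun φ => LinearMap.congr_fun this φ
  have hT : B.IsShear f (DistribSMul.toLinearMap k V g⁻¹) := hV
  refine B.dualBasis.ext fun m => ?_
  simp only [LinearMap.comp_apply, LinearEquiv.coe_coe, LinearMap.dualMap_apply',
    DistribSMul.toLinearMap_apply]
  rcases m with b | a
  · rw [hT.dualBasis_inl_comp, he, hW']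
  · rw [hT.dualBasis_inr_comp hf, map_add, he, he', hψ, hW]

end Contragredient

theorem K4.sg_inv : sg⁻¹ = sg := by decide

theorem K4.tg_inv : tg⁻¹ = tg := by decide

theorem K4.mem_of_sg_mem_of_tg_mem {S : Submonoid K4} (hσ : sg ∈ S) (hτ : tg ∈ S) (g : K4) :
    g ∈ S := by
  have hg : g = 1 ∨ g = sg ∨ g = tg ∨ g = sg * tg := by revert g; decide
  rcases hg with rfl | rfl | rfl | rfl
  exacts [S.one_mem, hσ, hτ, S.mul_mem hσ hτ]

section IsVpos

variable {k V : Type} [Field k] [AddCommGroup V] [Module k V] [DistribMulAction K4 V] {n : ℕ}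
  {B : Basis (Fin (n + 1) ⊕ Fin n) k V}

theorem IsVpos.isShear_sg_inv (hV : IsVpos k n V B) : B.IsShear Fin.succ (sg⁻¹ • ·) := by
  obtain ⟨h0, hsucc, -, -, hb, -⟩ := hV
  refine ⟨by simpa [K4.sg_inv] using hsucc, fun j hj => ?_, by simpa [K4.sg_inv] using hb⟩
  obtain rfl : j = 0 := (Fin.eq_zero_or_eq_succ j).resolve_right fun ⟨i, hi⟩ => hj ⟨i, hi.symm⟩
  simpa [K4.sg_inv] using h0

theorem IsVpos.isShear_tg_inv (hV : IsVpos k n V B) : B.IsShear Fin.castSucc (tg⁻¹ • ·) := by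
  obtain ⟨-, -, hcast, hlast, -, hb⟩ := hV
  refine ⟨by simpa [K4.tg_inv] using hcast, fun j hj => ?_, by simpa [K4.tg_inv] using hb⟩
  obtain rfl : j = Fin.last n :=
    (Fin.eq_castSucc_or_eq_last j).resolve_left fun ⟨i, hi⟩ => hj ⟨i, hi.symm⟩
  simpa [K4.tg_inv] using hlast

end IsVpos

theorem stmt12_general (k : Type) [Field k] (n : ℕ)
    (V : Type) [AddCommGroup V] [Module k V] [DistribMulAction K4 V] [SMulCommClass K4 k V]
    (BV : Module.Basis (Fin (n + 1) ⊕ Fin n) k V) (hV : IsVpos k n V BV)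
    (W : Type) [AddCommGroup W] [Module k W] [DistribMulAction K4 W] [SMulCommClass K4 k W]
    (BW : Module.Basis (Fin n ⊕ Fin (n + 1)) k W) (hW : IsVneg k n W BW) :
    ∃ e : (V →ₗ[k] k) ≃ₗ[k] W,
      ∀ (g : K4) (f : V →ₗ[k] k),
        e (f ∘ₗ DistribMulAction.toLinearMap k V g⁻¹) = g • e f := by
  obtain ⟨hσ, hτ, hσ', hτ'⟩ := hW
  let e :=
    BV.dualBasis.equiv BW ((Equiv.sumCongr Fin.revPerm Fin.revPerm).trans (Equiv.sumComm _ _))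
  have he (j : Fin (n + 1)) : e (BV.dualBasis (.inl j)) = BW (.inr j.rev) :=
    BV.dualBasis.equiv_apply _ _ _
  have he' (i : Fin n) : e (BV.dualBasis (.inr i)) = BW (.inl i.rev) :=
    BV.dualBasis.equiv_apply _ _ _
  refine ⟨e, K4.mem_of_sg_mem_of_tg_mem (S := contragredientIntertwiners K4 e) ?_ ?_⟩
  · exact mem_contragredientIntertwiners_of_isShear Fin.rev_succ (Fin.succ_injective n)
      hV.isShear_sg_inv he he' hσ hσ'
  · exact mem_contragredientIntertwiners_of_isShear Fin.rev_castSucc (Fin.castSucc_injective n)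
      hV.isShear_tg_inv he he' hτ hτ'

/-- For every `n ≥ 0`, the `k`-linear dual of `V_{2n+1}`, with the contragredient
`G`-action `(g • f)(x) = f(g⁻¹ • x)`, is isomorphic as a `kG`-module to `V_{-(2n+1)}`. -/
theorem stmt12 (k : Type) [Field k] [CharP k 2] (n : ℕ)
    (V : Type) [AddCommGroup V] [Module k V] [DistribMulAction K4 V] [SMulCommClass K4 k V]
    (BV : Module.Basis (Fin (n + 1) ⊕ Fin n) k V) (hV : IsVpos k n V BV)
    (W : Type) [AddCommGroup W] [Module k W] [DistribMulAction K4 W] [SMulCommClass K4 k W]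
    (BW : Module.Basis (Fin n ⊕ Fin (n + 1)) k W) (hW : IsVneg k n W BW) :
    ∃ e : (V →ₗ[k] k) ≃ₗ[k] W,
      ∀ (g : K4) (f : V →ₗ[k] k),
        e (f ∘ₗ DistribMulAction.toLinearMap k V g⁻¹) = g • e f :=
  stmt12_general k n V BV hV W BW hW
end

section
/- For every n ≥ 0, the kG-module V_{−(2n+1)} is indecomposable: it cannot be written as the internal direct sum of two nonzero kG-submodules. -/
/-!
Write `X = σ - 1`, `Y = τ - 1` and `W = span {b₀, …, bₙ}`; `W` contains both the image and the
kernel of `X`. If `V = S ⊕ T` with `S`, `T` stable under `G`, the projection `π` onto `S` along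
`T` commutes with `X` and `Y`, so `π W ⊆ ker X ⊆ W`. Applying `π` to `b_{i-1} = X aᵢ` and
`bᵢ = Y aᵢ` shows that the matrix `(m_{jl})` of `π` on `W` satisfies `m_{j+1,l+1} = m_{jl}`,
`m_{jn} = 0` for `j < n` and `m_{j0} = 0` for `j > 0`, which forces `π = c` on `W`. Hence
`W ⊆ T` (if `c = 0`) or `W ⊆ S`; in the first case every `s ∈ S` has `X s ∈ S ∩ W = 0`, so
`s ∈ ker X ⊆ W ⊆ T` and `s = 0`. The second case is symmetric.
-/

theorem Fin.eq_ite_of_shift_invariant {k : Type*} [Zero k] {n : ℕ}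
    (M : Fin (n + 1) → Fin (n + 1) → k)
    (hshift : ∀ i l : Fin n, M i.succ l.succ = M i.castSucc l.castSucc)
    (hlast : ∀ i : Fin n, M i.castSucc (Fin.last n) = 0)
    (hzero : ∀ i : Fin n, M i.succ 0 = 0) (j m : Fin (n + 1)) :
    M j m = if j = m then M 0 0 else 0 := by
  have shift : ∀ d : ℕ, ∀ i l j m : Fin (n + 1), (j : ℕ) = i + d → (m : ℕ) = l + d →
      M j m = M i l := by
    intro d
    induction d with
    | zero => intro i l j m hj hm; rw [Fin.ext hj, Fin.ext hm]
    | succ d ih =>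
      intro i l j m hj hm
      have hi : (i : ℕ) + d < n := by omega
      have hl : (l : ℕ) + d < n := by omega
      rw [show j = Fin.succ ⟨i + d, hi⟩ from Fin.ext (by simp; omega),
        show m = Fin.succ ⟨l + d, hl⟩ from Fin.ext (by simp; omega), hshift]
      exact ih _ _ _ _ rfl rfl
  split_ifs with hjm
  · subst hjm
    exact shift j 0 0 j j (by simp) (by simp)
  rcases lt_or_gt_of_ne (Fin.val_ne_of_ne hjm) with hlt | hgt
  · rw [shift j 0 ⟨m - j, by omega⟩ j m (by simp) (by simp; omega),
      ← shift (n - (m - j)) 0 ⟨m - j, by omega⟩ (Fin.castSucc ⟨n - (m - j), by omega⟩)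
        (Fin.last n) (by simp) (by simp; omega)]
    exact hlast _
  · rw [shift m (Fin.succ ⟨j - m - 1, by omega⟩) 0 j m (by simp; omega) (by simp)]
    exact hzero _

theorem Module.Basis.smul_sub_self_eq_sum {G k V ι κ : Type*} [Monoid G] [Ring k]
    [AddCommGroup V] [Module k V] [DistribMulAction G V] [SMulCommClass G k V]
    [Fintype ι] [Fintype κ] (B : Module.Basis (ι ⊕ κ) k V) {g : G} {w : ι → V}
    (hinl : ∀ i, g • B (Sum.inl i) = B (Sum.inl i) + w i)
    (hinr : ∀ j, g • B (Sum.inr j) = B (Sum.inr j)) (v : V) :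
    g • v - v = ∑ i, B.repr v (Sum.inl i) • w i := by
  conv_lhs => rw [← B.sum_repr v]
  simp only [Finset.smul_sum, smul_comm g, Fintype.sum_sum_type, hinl, hinr, smul_add,
    Finset.sum_add_distrib]
  abel

namespace Module.Basis

variable {k V ι κ : Type*} [Ring k] [AddCommGroup V] [Module k V]

def spanInr (B : Module.Basis (ι ⊕ κ) k V) : Submodule k V :=
  Submodule.span k (B '' Set.range Sum.inr)

theorem mem_spanInr_iff (B : Module.Basis (ι ⊕ κ) k V) {v : V} :
    v ∈ B.spanInr ↔ ∀ i, B.repr v (Sum.inl i) = 0 := by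
  rw [spanInr, B.mem_span_image]
  constructor
  · intro h i
    by_contra hi
    obtain ⟨j, hj⟩ := h (Finsupp.mem_support_iff.2 hi)
    exact Sum.inr_ne_inl hj
  · rintro h (i | j) hx
    · exact absurd (h i) (Finsupp.mem_support_iff.1 hx)
    · exact ⟨j, rfl⟩

end Module.Basis

theorem Submodule.eq_bot_of_mapsTo_of_disjoint {k V : Type*} [Ring k] [AddCommGroup V]
    [Module k V] {S W : Submodule k V} (f : V → V) (hfW : ∀ v, f v ∈ W)
    (hker : ∀ v, f v = 0 → v ∈ W) (hfS : ∀ v ∈ S, f v ∈ S) (hSW : Disjoint S W) : S = ⊥ := by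
  refine eq_bot_iff.2 fun v hv => ?_
  have hfv : f v = 0 := (Submodule.disjoint_def.1 hSW) _ (hfS v hv) (hfW v)
  exact (Submodule.disjoint_def.1 hSW) v hv (hker v hfv)

theorem Submodule.projection_smul {G k V : Type*} [Monoid G] [Ring k] [AddCommGroup V]
    [Module k V] [DistribMulAction G V] {S T : Submodule k V} (hST : IsCompl S T)
    (hS : ∀ g : G, ∀ v ∈ S, g • v ∈ S) (hT : ∀ g : G, ∀ v ∈ T, g • v ∈ T) (g : G) (v : V) :
    S.projection T hST (g • v) = g • S.projection T hST v := by
  obtain ⟨s, hs, t, ht, rfl⟩ :=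
    Submodule.mem_sup.1 (hST.sup_eq_top ▸ Submodule.mem_top : v ∈ S ⊔ T)
  simp only [smul_add, map_add, Submodule.projection_apply_of_mem_left hST hs,
    Submodule.projection_apply_of_mem_left hST (hS g s hs),
    Submodule.projection_apply_of_mem_right hST ht,
    Submodule.projection_apply_of_mem_right hST (hT g t ht), add_zero]

namespace IsVneg

variable {k V : Type} [Field k] [AddCommGroup V] [Module k V] [DistribMulAction K4 V]
  [SMulCommClass K4 k V] {n : ℕ} {B : Module.Basis (Fin n ⊕ Fin (n + 1)) k V}

theorem sg_smul_sub_self (hV : IsVneg k n V B) (v : V) :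
    sg • v - v = ∑ i, B.repr v (Sum.inl i) • B (Sum.inr i.castSucc) :=
  B.smul_sub_self_eq_sum hV.1 hV.2.2.1 v

theorem tg_smul_sub_self (hV : IsVneg k n V B) (v : V) :
    tg • v - v = ∑ i, B.repr v (Sum.inl i) • B (Sum.inr i.succ) :=
  B.smul_sub_self_eq_sum hV.2.1 hV.2.2.2 v

theorem repr_sg_smul_sub_self_castSucc (hV : IsVneg k n V B) (v : V) (i : Fin n) :
    B.repr (sg • v - v) (Sum.inr i.castSucc) = B.repr v (Sum.inl i) := by
  simp [hV.sg_smul_sub_self, Finsupp.single_apply]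

theorem repr_sg_smul_sub_self_last (hV : IsVneg k n V B) (v : V) :
    B.repr (sg • v - v) (Sum.inr (Fin.last n)) = 0 := by
  simp [hV.sg_smul_sub_self]

theorem repr_tg_smul_sub_self_succ (hV : IsVneg k n V B) (v : V) (i : Fin n) :
    B.repr (tg • v - v) (Sum.inr i.succ) = B.repr v (Sum.inl i) := by
  simp [hV.tg_smul_sub_self, Finsupp.single_apply]

theorem repr_tg_smul_sub_self_zero (hV : IsVneg k n V B) (v : V) :
    B.repr (tg • v - v) (Sum.inr 0) = 0 := by
  simp [hV.tg_smul_sub_self]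

theorem sg_smul_sub_self_mem_spanInr (hV : IsVneg k n V B) (v : V) :
    sg • v - v ∈ B.spanInr := by
  rw [hV.sg_smul_sub_self]
  exact Submodule.sum_mem _ fun i _ =>
    Submodule.smul_mem _ _ (Submodule.subset_span ⟨_, ⟨_, rfl⟩, rfl⟩)

theorem mem_spanInr_of_sg_smul_eq (hV : IsVneg k n V B) {v : V} (hv : sg • v = v) :
    v ∈ B.spanInr := by
  refine B.mem_spanInr_iff.2 fun i => ?_
  rw [← hV.repr_sg_smul_sub_self_castSucc, hv, sub_self, map_zero, Finsupp.zero_apply]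

theorem exists_apply_inr_eq_smul (hV : IsVneg k n V B) (φ : V →ₗ[k] V)
    (hφ : ∀ g : K4, ∀ v, φ (g • v) = g • φ v) :
    ∃ c : k, ∀ j, φ (B (Sum.inr j)) = c • B (Sum.inr j) := by
  have hcomm : ∀ g : K4, ∀ v, φ (g • v - v) = g • φ v - φ v := by
    intro g v; rw [map_sub, hφ]
  have hinr_castSucc : ∀ i, B (Sum.inr i.castSucc) = sg • B (Sum.inl i) - B (Sum.inl i) := by
    intro i; rw [hV.1 i, add_sub_cancel_left]
  have hinr_succ : ∀ i, B (Sum.inr i.succ) = tg • B (Sum.inl i) - B (Sum.inl i) := by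
    intro i; rw [hV.2.1 i, add_sub_cancel_left]
  set M : Fin (n + 1) → Fin (n + 1) → k := fun j m => B.repr (φ (B (Sum.inr j))) (Sum.inr m)
  have hM : ∀ j m, M j m = if j = m then M 0 0 else 0 := by
    refine Fin.eq_ite_of_shift_invariant M (fun i l => ?_) (fun i => ?_) (fun i => ?_)
    · simp only [M, hinr_castSucc, hinr_succ, hcomm, hV.repr_sg_smul_sub_self_castSucc,
        hV.repr_tg_smul_sub_self_succ]
    · simp only [M, hinr_castSucc, hcomm, hV.repr_sg_smul_sub_self_last]
    · simp only [M, hinr_succ, hcomm, hV.repr_tg_smul_sub_self_zero]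
  have hspan : ∀ j, φ (B (Sum.inr j)) ∈ B.spanInr := fun j =>
    hV.mem_spanInr_of_sg_smul_eq (by rw [← hφ, hV.2.2.1])
  refine ⟨M 0 0, fun j => B.ext_elem fun x => ?_⟩
  rcases x with i | m
  · simp [B.mem_spanInr_iff.1 (hspan j) i]
  · simpa [Finsupp.single_apply, eq_comm] using hM j m

theorem eq_bot_of_disjoint_spanInr (hV : IsVneg k n V B) {P : Submodule k V}
    (hP : ∀ v ∈ P, sg • v ∈ P) (hPW : Disjoint P B.spanInr) : P = ⊥ :=
  Submodule.eq_bot_of_mapsTo_of_disjoint (fun v => sg • v - v) hV.sg_smul_sub_self_mem_spanInr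
    (fun _ hv => hV.mem_spanInr_of_sg_smul_eq (sub_eq_zero.1 hv))
    (fun v hv => sub_mem (hP v hv) hv) hPW

theorem spanInr_le_or_spanInr_le (hV : IsVneg k n V B) {S T : Submodule k V}
    (hST : IsCompl S T) (hS : ∀ g : K4, ∀ v ∈ S, g • v ∈ S) (hT : ∀ g : K4, ∀ v ∈ T, g • v ∈ T) :
    B.spanInr ≤ S ∨ B.spanInr ≤ T := by
  obtain ⟨c, hc⟩ := hV.exists_apply_inr_eq_smul (S.projection T hST)
    (Submodule.projection_smul hST hS hT)
  rw [Module.Basis.spanInr, Submodule.span_le, Submodule.span_le]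
  rcases eq_or_ne c 0 with rfl | hc0
  · right
    rintro _ ⟨_, ⟨j, rfl⟩, rfl⟩
    rw [SetLike.mem_coe, ← Submodule.projection_apply_eq_zero_iff hST, hc, zero_smul]
  · left
    rintro _ ⟨_, ⟨j, rfl⟩, rfl⟩
    rw [SetLike.mem_coe, ← inv_smul_smul₀ hc0 (B (Sum.inr j)), ← hc]
    exact S.smul_mem _ (Submodule.projection_apply_mem hST _)

end IsVneg

theorem stmt14_general (k : Type) [Field k] (n : ℕ)
    (V : Type) [AddCommGroup V] [Module k V] [DistribMulAction K4 V] [SMulCommClass K4 k V]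
    (B : Module.Basis (Fin n ⊕ Fin (n + 1)) k V) (hV : IsVneg k n V B) :
    ¬ ∃ S T : Submodule k V,
        (∀ g : K4, ∀ v ∈ S, g • v ∈ S) ∧ (∀ g : K4, ∀ v ∈ T, g • v ∈ T) ∧
        S ≠ ⊥ ∧ T ≠ ⊥ ∧ S ⊓ T = ⊥ ∧ S ⊔ T = ⊤ := by
  rintro ⟨S, T, hS, hT, hS0, hT0, hinf, hsup⟩
  have hST : IsCompl S T := ⟨disjoint_iff.2 hinf, codisjoint_iff.2 hsup⟩
  rcases hV.spanInr_le_or_spanInr_le hST hS hT with hWS | hWT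
  · exact hT0 (hV.eq_bot_of_disjoint_spanInr (hT sg) (hST.disjoint.symm.mono_right hWS))
  · exact hS0 (hV.eq_bot_of_disjoint_spanInr (hS sg) (hST.disjoint.mono_right hWT))

/-- For every `n ≥ 0`, the `kG`-module `V_{-(2n+1)}` is indecomposable: it is not the
internal direct sum of two nonzero `kG`-submodules (`G`-invariant `k`-subspaces). -/
theorem stmt14 (k : Type) [Field k] [CharP k 2] (n : ℕ)
    (V : Type) [AddCommGroup V] [Module k V] [DistribMulAction K4 V] [SMulCommClass K4 k V]
    (B : Module.Basis (Fin n ⊕ Fin (n + 1)) k V) (hV : IsVneg k n V B) :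
    ¬ ∃ S T : Submodule k V,
        (∀ g : K4, ∀ v ∈ S, g • v ∈ S) ∧ (∀ g : K4, ∀ v ∈ T, g • v ∈ T) ∧
        S ≠ ⊥ ∧ T ≠ ⊥ ∧ S ⊓ T = ⊥ ∧ S ⊔ T = ⊤ :=
  stmt14_general k n V B hV
end

section
/- For every n ≥ 1, the kG-module V_{2n,∞} is indecomposable: it cannot be written as the internal direct sum of two nonzero kG-submodules. -/
/-!
Write `X = σ - 1`, `Y = τ - 1`, let `p : V → kⁿ` read off the `a`-coordinates and
`ι : kⁿ → V` send `c` to `∑ cᵢ bᵢ`. Then `0 → kⁿ → V → kⁿ → 0` (via `ι`, `p`) is exact,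
`X = ι ∘ p` and `Y = ι ∘ s ∘ p`, where `s eᵢ = eᵢ₊₁` is the nilpotent shift of `kⁿ`.
If `V = S ⊕ T` with `S`, `T` invariant, then `ker p = X V = X S ⊕ X T`; from this,
`p S` and `p T` are disjoint and `s`-invariant, and nonzero when `S` and `T` are.
But `ker s = k eₙ` is one-dimensional, so every nonzero `s`-invariant subspace contains `eₙ`.
-/

open Module

namespace Submodule

variable {R U V : Type*} [Ring R] [AddCommGroup U] [Module R U] [AddCommGroup V] [Module R V]

theorem mem_invtSubmodule_toLinearMap_sub_one {G : Type*} [DistribSMul G V] [SMulCommClass G R V]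
    {W : Submodule R V} {g : G} (hW : ∀ v ∈ W, g • v ∈ W) :
    W ∈ End.invtSubmodule (DistribSMul.toLinearMap R V g - 1) :=
  fun v hv => W.sub_mem (hW v hv) hv

theorem mem_map_of_sub_mem_range {X : End R V} {S T : Submodule R V} (hST : IsCompl S T)
    (hS : S ∈ X.invtSubmodule) (hT : T ∈ X.invtSubmodule) {v w : V} (hv : v ∈ S) (hw : w ∈ T)
    (hvw : v - w ∈ LinearMap.range X) : v ∈ S.map X := by
  obtain ⟨u, hu⟩ := hvw
  obtain ⟨s, t, hs, ht, rfl⟩ := codisjoint_iff_exists_add_eq.1 hST.codisjoint u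
  have hvs : v - X s = w + X t := by
    rw [map_add, eq_sub_iff_add_eq] at hu
    rw [← hu]; abel
  have : v - X s = 0 :=
    disjoint_def.1 hST.disjoint _ (S.sub_mem hv (hS hs)) (hvs ▸ T.add_mem hw (hT ht))
  exact ⟨s, hs, (sub_eq_zero.1 this).symm⟩

section ShortExact

variable {ι : U →ₗ[R] V} {p : V →ₗ[R] U} (hp : Function.Surjective p)
  (hιp : Function.Exact ι p) {S T : Submodule R V} (hST : IsCompl S T)
  (hS : S ∈ End.invtSubmodule (ι ∘ₗ p)) (hT : T ∈ End.invtSubmodule (ι ∘ₗ p))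
include hp hιp hST hS hT

theorem mem_map_comp_of_apply_eq {v w : V} (hv : v ∈ S) (hw : w ∈ T) (h : p v = p w) :
    v ∈ S.map (ι ∘ₗ p) := by
  refine mem_map_of_sub_mem_range hST hS hT hv hw ?_
  rw [LinearMap.range_comp_of_range_eq_top _ (LinearMap.range_eq_top.2 hp),
    ← hιp.linearMap_ker_eq, LinearMap.mem_ker, map_sub, h, sub_self]

theorem eq_bot_of_map_eq_bot (hSp : S.map p = ⊥) : S = ⊥ := by
  have hp0 : ∀ u ∈ S, p u = 0 := fun u hu => by
    rw [← mem_bot R, ← hSp]; exact mem_map_of_mem hu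
  refine eq_bot_iff.2 fun v hv => ?_
  obtain ⟨s, hs, rfl⟩ := mem_map_comp_of_apply_eq hp hιp hST hS hT hv T.zero_mem
    (by rw [map_zero, hp0 v hv])
  rw [mem_bot R, LinearMap.comp_apply, hp0 s hs, map_zero]

theorem disjoint_map_of_isCompl : Disjoint (S.map p) (T.map p) := by
  refine disjoint_def.2 ?_
  rintro _ ⟨v, hv, rfl⟩ ⟨w, hw, hvw⟩
  obtain ⟨s, -, rfl⟩ := mem_map_comp_of_apply_eq hp hιp hST hS hT hv hw hvw.symm
  exact hιp.apply_apply_eq_zero _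

theorem map_mem_invtSubmodule (hι : Function.Injective ι) {f : End R U}
    (hfS : S ∈ End.invtSubmodule (ι ∘ₗ f ∘ₗ p)) : S.map p ∈ f.invtSubmodule := by
  rintro _ ⟨v, hv, rfl⟩
  obtain ⟨s, hs, hsv⟩ := mem_map_comp_of_apply_eq hp hιp hST hS hT (hfS hv) T.zero_mem
    (by rw [map_zero]; exact hιp.apply_apply_eq_zero _)
  exact ⟨s, hs, hι hsv⟩

end ShortExact

end Submodule

namespace Module.End

theorem exists_mem_ne_zero_apply_eq_zero_of_isNilpotent {R M : Type*} [Semiring R] [AddCommMonoid M]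
    [Module R M] {f : End R M} (hf : IsNilpotent f) {W : Submodule R M}
    (hW : W ∈ f.invtSubmodule) (hW0 : W ≠ ⊥) : ∃ y ∈ W, y ≠ 0 ∧ f y = 0 := by
  obtain ⟨m, hm⟩ := hf
  obtain ⟨x, hx, hx0⟩ := W.exists_mem_ne_zero_of_ne_bot hW0
  have hmx : (f ^ m) x = 0 := by rw [hm, LinearMap.zero_apply]
  clear hm
  induction m generalizing x with
  | zero => exact absurd hmx hx0
  | succ m ih =>
    by_cases hfx : f x = 0
    · exact ⟨x, hx, hx0, hfx⟩
    · exact ih (f x) (hW hx) hfx (by rwa [pow_succ, mul_apply] at hmx)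

theorem ker_le_of_mem_invtSubmodule {K M : Type*} [Field K] [AddCommGroup M] [Module K M]
    {f : End K M} (hf : IsNilpotent f) {e : M} (hker : LinearMap.ker f = K ∙ e)
    {W : Submodule K M} (hW : W ∈ f.invtSubmodule) (hW0 : W ≠ ⊥) : LinearMap.ker f ≤ W := by
  obtain ⟨y, hyW, hy0, hfy⟩ := exists_mem_ne_zero_apply_eq_zero_of_isNilpotent hf hW hW0
  obtain ⟨a, rfl⟩ := Submodule.mem_span_singleton.1 (hker ▸ hfy : y ∈ K ∙ e)
  have ha : a ≠ 0 := by rintro rfl; simp at hy0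
  rw [hker, Submodule.span_singleton_le_iff_mem]
  simpa [smul_smul, ha] using W.smul_mem a⁻¹ hyW

end Module.End

section FinShift

variable (R : Type*) [Semiring R] (m : ℕ)

def finShift : End R (Fin (m + 1) → R) where
  toFun c := Fin.cons 0 (Fin.init c)
  map_add' c d := by ext i; refine Fin.cases ?_ (fun j => ?_) i <;> simp [Fin.init]
  map_smul' a c := by ext i; refine Fin.cases ?_ (fun j => ?_) i <;> simp [Fin.init]

variable {R m}

@[simp] theorem finShift_apply_zero (c : Fin (m + 1) → R) : finShift R m c 0 = 0 := rfl
@[simp] theorem finShift_apply_succ (c : Fin (m + 1) → R) (j : Fin m) :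
    finShift R m c j.succ = c j.castSucc := rfl

theorem finShift_single (i : Fin (m + 1)) :
    finShift R m (Pi.single i 1) =
      if h : (i : ℕ) + 1 < m + 1 then Pi.single ⟨i + 1, h⟩ 1 else 0 := by
  ext j
  refine Fin.cases ?_ (fun j => ?_) j
  · split_ifs
    · rw [finShift_apply_zero, Pi.single_eq_of_ne (Fin.ne_of_val_ne (by simp))]
    · rfl
  · split_ifs
    · simp [Pi.single_apply, Fin.ext_iff]
    · simp [Pi.single_apply, Fin.ext_iff]; omega

theorem finShift_pow_apply_eq_zero (c : Fin (m + 1) → R) {j : ℕ} (i : Fin (m + 1))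
    (hi : (i : ℕ) < j) : (finShift R m ^ j) c i = 0 := by
  induction j generalizing i with
  | zero => omega
  | succ j ih =>
    rw [pow_succ', End.mul_apply]
    refine Fin.cases (by simp) (fun i hi => ?_) i hi
    simp only [finShift_apply_succ]
    exact ih _ (by simp at hi ⊢; omega)

theorem isNilpotent_finShift : IsNilpotent (finShift R m) :=
  ⟨m + 1, LinearMap.ext fun c => funext fun i => finShift_pow_apply_eq_zero c i i.isLt⟩

theorem ker_finShift : LinearMap.ker (finShift R m) = R ∙ Pi.single (Fin.last m) 1 := by
  ext c
  simp only [LinearMap.mem_ker, Submodule.mem_span_singleton]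
  constructor
  · intro h
    refine ⟨c (Fin.last m), funext fun i => Fin.lastCases (by simp) (fun j => ?_) i⟩
    simpa [Fin.castSucc_ne_last] using (congrFun h j.succ).symm
  · rintro ⟨a, rfl⟩
    ext j
    refine Fin.cases (by simp) (fun j => ?_) j
    simp [Fin.castSucc_ne_last]

end FinShift

namespace Module.Basis

variable {α β R M : Type*} [Finite α] [Finite β] [CommRing R] [AddCommGroup M] [Module R M]
  (B : Basis (α ⊕ β) R M)

noncomputable def equivFunSum : M ≃ₗ[R] (α → R) × (β → R) :=
  B.equivFun ≪≫ₗ LinearEquiv.sumArrowLequivProdArrow α β R R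

noncomputable def inlCoords : M →ₗ[R] α → R := LinearMap.fst R _ _ ∘ₗ B.equivFunSum.toLinearMap

noncomputable def inrCombination : (β → R) →ₗ[R] M :=
  B.equivFunSum.symm.toLinearMap ∘ₗ LinearMap.inr R _ _

theorem exact_inrCombination_inlCoords : Function.Exact B.inrCombination B.inlCoords :=
  (LinearEquiv.conj_symm_exact_iff_exact _ _ B.equivFunSum).2 Function.Exact.inr_fst

theorem inrCombination_injective : Function.Injective B.inrCombination :=
  B.equivFunSum.symm.injective.comp (LinearMap.inr_injective (R := R))

theorem inlCoords_surjective : Function.Surjective B.inlCoords :=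
  (LinearMap.fst_surjective (R := R)).comp B.equivFunSum.surjective

@[simp] theorem inlCoords_inr (j : β) : B.inlCoords (B (.inr j)) = 0 := by
  ext i; simp [inlCoords, equivFunSum]

@[simp] theorem inlCoords_inl [DecidableEq α] (i : α) :
    B.inlCoords (B (.inl i)) = Pi.single i 1 := by
  classical
  ext j; simp [inlCoords, equivFunSum, Pi.single_apply, Finsupp.single_apply, eq_comm]

@[simp] theorem inrCombination_single [DecidableEq β] (j : β) :
    B.inrCombination (Pi.single j 1) = B (.inr j) := by
  classical
  rw [inrCombination, LinearMap.comp_apply, LinearEquiv.coe_coe, LinearEquiv.symm_apply_eq]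
  ext i <;> simp [equivFunSum, Pi.single_apply, Finsupp.single_apply, eq_comm]

end Module.Basis

namespace IsVinf

variable {k V : Type} [Field k] [AddCommGroup V] [Module k V] [DistribMulAction K4 V]
  [SMulCommClass K4 k V]

theorem toLinearMap_sg_sub_one {n : ℕ} {B : Basis (Fin n ⊕ Fin n) k V} (hV : IsVinf k n V B) :
    DistribSMul.toLinearMap k V sg - 1 = B.inrCombination ∘ₗ B.inlCoords := by
  refine B.ext fun x => ?_
  rcases x with i | j
  · simp [hV.1 i]
  · simp [hV.2.2.1 j]

theorem toLinearMap_tg_sub_one {m : ℕ} {B : Basis (Fin (m + 1) ⊕ Fin (m + 1)) k V}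
    (hV : IsVinf k (m + 1) V B) :
    DistribSMul.toLinearMap k V tg - 1 = B.inrCombination ∘ₗ finShift k m ∘ₗ B.inlCoords := by
  refine B.ext fun x => ?_
  rcases x with i | j
  · rw [LinearMap.sub_apply, DistribSMul.toLinearMap_apply, hV.2.1 i, End.one_apply,
      add_sub_cancel_left, LinearMap.comp_apply, LinearMap.comp_apply, Basis.inlCoords_inl,
      finShift_single]
    split_ifs <;> simp
  · simp [hV.2.2.2 j]

variable {m : ℕ} {B : Basis (Fin (m + 1) ⊕ Fin (m + 1)) k V} (hV : IsVinf k (m + 1) V B)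
include hV

theorem mem_invtSubmodule_inrCombination_comp_inlCoords {W : Submodule k V}
    (hW : ∀ g : K4, ∀ v ∈ W, g • v ∈ W) :
    W ∈ End.invtSubmodule (B.inrCombination ∘ₗ B.inlCoords) :=
  hV.toLinearMap_sg_sub_one ▸ Submodule.mem_invtSubmodule_toLinearMap_sub_one (hW sg)

theorem mem_invtSubmodule_inrCombination_comp_finShift_comp_inlCoords {W : Submodule k V}
    (hW : ∀ g : K4, ∀ v ∈ W, g • v ∈ W) :
    W ∈ End.invtSubmodule (B.inrCombination ∘ₗ finShift k m ∘ₗ B.inlCoords) :=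
  hV.toLinearMap_tg_sub_one ▸ Submodule.mem_invtSubmodule_toLinearMap_sub_one (hW tg)

variable {S T : Submodule k V} (hST : IsCompl S T) (hS : ∀ g : K4, ∀ v ∈ S, g • v ∈ S)
  (hT : ∀ g : K4, ∀ v ∈ T, g • v ∈ T)
include hST hS hT

theorem disjoint_map_inlCoords : Disjoint (S.map B.inlCoords) (T.map B.inlCoords) :=
  Submodule.disjoint_map_of_isCompl B.inlCoords_surjective B.exact_inrCombination_inlCoords hST
    (hV.mem_invtSubmodule_inrCombination_comp_inlCoords hS)
    (hV.mem_invtSubmodule_inrCombination_comp_inlCoords hT)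

theorem ker_finShift_le_map_inlCoords (hS0 : S ≠ ⊥) :
    LinearMap.ker (finShift k m) ≤ S.map B.inlCoords := by
  have hSX := hV.mem_invtSubmodule_inrCombination_comp_inlCoords hS
  have hTX := hV.mem_invtSubmodule_inrCombination_comp_inlCoords hT
  refine End.ker_le_of_mem_invtSubmodule isNilpotent_finShift ker_finShift ?_ ?_
  · exact Submodule.map_mem_invtSubmodule B.inlCoords_surjective B.exact_inrCombination_inlCoords
      hST hSX hTX B.inrCombination_injective
      (hV.mem_invtSubmodule_inrCombination_comp_finShift_comp_inlCoords hS)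
  · exact mt (Submodule.eq_bot_of_map_eq_bot B.inlCoords_surjective
      B.exact_inrCombination_inlCoords hST hSX hTX) hS0

end IsVinf

theorem stmt15_general (k : Type) [Field k] (n : ℕ) (hn : 1 ≤ n)
    (V : Type) [AddCommGroup V] [Module k V] [DistribMulAction K4 V] [SMulCommClass K4 k V]
    (B : Module.Basis (Fin n ⊕ Fin n) k V) (hV : IsVinf k n V B) :
    ¬ ∃ S T : Submodule k V,
        (∀ g : K4, ∀ v ∈ S, g • v ∈ S) ∧ (∀ g : K4, ∀ v ∈ T, g • v ∈ T) ∧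
        S ≠ ⊥ ∧ T ≠ ⊥ ∧ S ⊓ T = ⊥ ∧ S ⊔ T = ⊤ := by
  rintro ⟨S, T, hSG, hTG, hS0, hT0, hST, hSTtop⟩
  obtain ⟨m, rfl⟩ := Nat.exists_eq_add_of_le' hn
  have hcompl : IsCompl S T := ⟨disjoint_iff.2 hST, codisjoint_iff.2 hSTtop⟩
  have hker := (hV.disjoint_map_inlCoords hcompl hSG hTG).mono
    (hV.ker_finShift_le_map_inlCoords hcompl hSG hTG hS0)
    (hV.ker_finShift_le_map_inlCoords hcompl.symm hTG hSG hT0)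
  rw [disjoint_self, ker_finShift, Submodule.span_singleton_eq_bot] at hker
  simpa using congrFun hker (Fin.last m)

/-- For every `n ≥ 1`, the `kG`-module `V_{2n,∞}` is indecomposable: it is not the
internal direct sum of two nonzero `kG`-submodules (`G`-invariant `k`-subspaces). -/
theorem stmt15 (k : Type) [Field k] [CharP k 2] (n : ℕ) (hn : 1 ≤ n)
    (V : Type) [AddCommGroup V] [Module k V] [DistribMulAction K4 V] [SMulCommClass K4 k V]
    (B : Module.Basis (Fin n ⊕ Fin n) k V) (hV : IsVinf k n V B) :
    ¬ ∃ S T : Submodule k V,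
        (∀ g : K4, ∀ v ∈ S, g • v ∈ S) ∧ (∀ g : K4, ∀ v ∈ T, g • v ∈ T) ∧
        S ≠ ⊥ ∧ T ≠ ⊥ ∧ S ⊓ T = ⊥ ∧ S ⊔ T = ⊤ :=
  stmt15_general k n hn V B hV
end
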